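/- arXiv:2107.02587 — 4 statements merged into one kernel-verified Lean document; each statement's English description precedes it below -/
import Mathlib

section
/- The generalized Baire space κ^κ is homeomorphic to the subspace {x ∈ 2^κ : for every α < κ there is β ≥ α with x(β) = 1} of the generalized Cantor space 2^κ. -/
universe u v

open Cardinal Set

namespace GDST

/-- A *limit element* of an order: an element with some predecessor but
no immediate predecessor (i.e. it sits at a limit position). -/
def IsLimitElt {α : Type v} [LT α] (a : α) : Prop :=
  (∃ b, b < a) ∧ ∀ b, b < a → ∃ c, b < c ∧ c < a

/-- The space `X` has weight at most `κ`: it admits a topological basis of cardinality ≤ κ. -/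
def HasWeightLE (κ : Cardinal.{u}) (X : Type u) [TopologicalSpace X] : Prop :=
  ∃ B : Set (Set X), TopologicalSpace.IsTopologicalBasis B ∧ #B ≤ κ

/-- `X` is `κ`-additive: intersections of fewer than `κ` open sets are open. -/
def KAdditive (κ : Cardinal.{u}) (X : Type u) [TopologicalSpace X] : Prop :=
  ∀ S : Set (Set X), #S < κ → (∀ U ∈ S, IsOpen U) → IsOpen (⋂₀ S)

/-- `X` is `κ`-Lindelöf: every open cover has a subcover of size `< κ`. -/
def KLindelof (κ : Cardinal.{u}) (X : Type u) [TopologicalSpace X] : Prop :=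
  ∀ 𝒰 : Set (Set X), (∀ U ∈ 𝒰, IsOpen U) → ⋃₀ 𝒰 = Set.univ →
    ∃ 𝒱 ⊆ 𝒰, #𝒱 < κ ∧ ⋃₀ 𝒱 = Set.univ

/-- `X` is `κ`-perfect: no point `x` is `κ`-isolated, i.e. no `{x}` is an intersection
of fewer than `κ` open sets. -/
def KPerfect (κ : Cardinal.{u}) (X : Type u) [TopologicalSpace X] : Prop :=
  ∀ x : X, ¬ ∃ S : Set (Set X), #S < κ ∧ (∀ U ∈ S, IsOpen U) ∧ ⋂₀ S = {x}

/-- `A` is `G_δ^κ` in `X`: an intersection of `κ`-many open sets. -/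
def IsGDeltaKappa (κ : Cardinal.{u}) {X : Type u} [TopologicalSpace X] (A : Set X) : Prop :=
  ∃ U : κ.ord.ToType → Set X, (∀ i, IsOpen (U i)) ∧ A = ⋂ i, U i

/-! ### Generalized Baire and Cantor spaces -/

/-- The bounded topology on `ι → A`: generated by the sets of functions with a
prescribed restriction to a proper initial segment `{b | b < a}` of `ι`. -/
def BoundedTopology (ι : Type u) [LinearOrder ι] (A : Type v) : TopologicalSpace (ι → A) :=
  TopologicalSpace.generateFrom
    {U | ∃ (a : ι) (y : ι → A), U = {x : ι → A | ∀ b, b < a → x b = y b}}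

/-- The generalized Baire space `κ^κ`. -/
def GenBaire (κ : Cardinal.{u}) : Type u := κ.ord.ToType → κ.ord.ToType

noncomputable instance (κ : Cardinal.{u}) : TopologicalSpace (GenBaire κ) :=
  BoundedTopology κ.ord.ToType κ.ord.ToType

/-- The generalized Cantor space `2^κ`. -/
def GenCantor (κ : Cardinal.{u}) : Type u := κ.ord.ToType → Bool

noncomputable instance (κ : Cardinal.{u}) : TopologicalSpace (GenCantor κ) :=
  BoundedTopology κ.ord.ToType Bool

/-! ### The strong and fair (strong) κ-Choquet games -/

/-- A transfinite sequence of moves of player I: at each round a pair `(U, x)`. -/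
abbrev IMoves (κ : Cardinal.{u}) (X : Type u) : Type u := κ.ord.ToType → Set X × X

/-- A strategy for player II: given the moves of I (only the moves up to the current
round may be used, see `IsIIStrategy`) and the current round, produce II's move. -/
abbrev Strategy (κ : Cardinal.{u}) (X : Type u) : Type u := IMoves κ X → κ.ord.ToType → Set X

/-- The intersection of the sets played before round `a`. -/
def InterBelow {ι : Type u} {X : Type u} [LT ι] (V : ι → Set X) (a : ι) : Set X :=
  ⋂ b, ⋂ (_ : b < a), V b

/-- `U` is relatively open in `T`. -/
def RelOpenIn {X : Type u} [TopologicalSpace X] (T U : Set X) : Prop :=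
  ∃ W : Set X, IsOpen W ∧ U = W ∩ T

/-- Player I's move at round `a` is legal: `(f a).1` is a nonempty relatively open subset of
the intersection of all previously played sets, and the point `(f a).2` belongs to it. -/
def LegalI {κ : Cardinal.{u}} {X : Type u} [TopologicalSpace X]
    (σ : Strategy κ X) (f : IMoves κ X) (a : κ.ord.ToType) : Prop :=
  RelOpenIn (InterBelow (σ f) a) (f a).1 ∧ (f a).2 ∈ (f a).1

/-- Player II's answer (by `σ`) at round `a` is legal: it is relatively open in the
intersection of all previously played sets, contains I's point, and is contained in I's set. -/
def LegalII {κ : Cardinal.{u}} {X : Type u} [TopologicalSpace X]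
    (σ : Strategy κ X) (f : IMoves κ X) (a : κ.ord.ToType) : Prop :=
  RelOpenIn (InterBelow (σ f) a) (σ f a) ∧ (f a).2 ∈ σ f a ∧ σ f a ⊆ (f a).1

/-- All moves before round `a` were legal. -/
def LegalBelow {κ : Cardinal.{u}} {X : Type u} [TopologicalSpace X]
    (σ : Strategy κ X) (f : IMoves κ X) (a : κ.ord.ToType) : Prop :=
  ∀ b, b < a → LegalI σ f b ∧ LegalII σ f b

/-- `σ` only depends on the moves of I played so far. -/
def IsIIStrategy {κ : Cardinal.{u}} {X : Type u} (σ : Strategy κ X) : Prop :=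
  ∀ f g : IMoves κ X, ∀ a, (∀ b, b ≤ a → f b = g b) → σ f a = σ g a

/-- `σ` is a winning strategy for player II in the strong κ-Choquet game `G^s_κ(X)`:
it answers legally to legal positions, and in any (possibly partial) legal run the
intersection of the played sets at every limit round—including the final one—is nonempty. -/
def WinningStrong {κ : Cardinal.{u}} {X : Type u} [TopologicalSpace X]
    (σ : Strategy κ X) : Prop :=
  IsIIStrategy σ ∧
  (∀ f a, LegalBelow σ f a → LegalI σ f a → LegalII σ f a) ∧
  (∀ f a, IsLimitElt a → LegalBelow σ f a → (InterBelow (σ f) a).Nonempty) ∧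
  (∀ f, (∀ a, LegalI σ f a ∧ LegalII σ f a) → (⋂ a, σ f a).Nonempty)

/-- `σ` is a winning strategy for player II in the fair strong κ-Choquet game `fG^s_κ(X)`:
it answers legally to legal positions, and for every legal run either the intersection of
the played sets is empty at some limit round `< κ`, or the final intersection is nonempty. -/
def WinningFair {κ : Cardinal.{u}} {X : Type u} [TopologicalSpace X]
    (σ : Strategy κ X) : Prop :=
  IsIIStrategy σ ∧
  (∀ f a, LegalBelow σ f a → LegalI σ f a → LegalII σ f a) ∧
  (∀ f, (∀ a, LegalI σ f a ∧ LegalII σ f a) →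
    (∃ a, IsLimitElt a ∧ InterBelow (σ f) a = ∅) ∨ (⋂ a, σ f a).Nonempty)

/-- `X` is a strong κ-Choquet space. -/
def SCSpace (κ : Cardinal.{u}) (X : Type u) [TopologicalSpace X] : Prop :=
  HasWeightLE κ X ∧ ∃ σ : Strategy κ X, WinningStrong σ

/-- `X` is a strongly fair κ-Choquet space. -/
def fSCSpace (κ : Cardinal.{u}) (X : Type u) [TopologicalSpace X] : Prop :=
  HasWeightLE κ X ∧ ∃ σ : Strategy κ X, WinningFair σ

/-! ### Trees on κ -/

/-- Sequences of length `< κ` with values in `κ`, encoded as pairs `(a, x)` representing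
the restriction of `x : κ → κ` to the initial segment `{b | b < a}`. -/
abbrev TreeSeq (κ : Cardinal.{u}) : Type u := κ.ord.ToType × (κ.ord.ToType → κ.ord.ToType)

/-- `T` is a tree on `κ`: membership of `(a, x)` only depends on the restriction of `x`
below `a` (so that `T` really is a set of `<κ`-sequences), and `T` is closed under
initial segments. -/
def IsTreeOn (κ : Cardinal.{u}) (T : Set (TreeSeq κ)) : Prop :=
  (∀ a, ∀ x y : κ.ord.ToType → κ.ord.ToType,
      (∀ b, b < a → x b = y b) → ((a, x) ∈ T ↔ (a, y) ∈ T)) ∧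
  (∀ a x, (a, x) ∈ T → ∀ b, b ≤ a → (b, x) ∈ T)

/-- The body `[T]` of a tree `T` on `κ`. -/
def TreeBody (κ : Cardinal.{u}) (T : Set (TreeSeq κ)) : Set (GenBaire κ) :=
  {x | ∀ a, (a, x) ∈ T}

/-- `T` is pruned: every element has extensions in `T` of every length `< κ`. -/
def TreePruned (κ : Cardinal.{u}) (T : Set (TreeSeq κ)) : Prop :=
  ∀ a x, (a, x) ∈ T → ∀ c, a ≤ c → ∃ y, (∀ b, b < a → y b = x b) ∧ (c, y) ∈ T

/-- `T` is `<κ`-closed: a limit-length sequence all of whose proper initial segments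
lie in `T` lies in `T`. -/
def TreeLtClosed (κ : Cardinal.{u}) (T : Set (TreeSeq κ)) : Prop :=
  ∀ a, IsLimitElt a → ∀ x, (∀ b, b < a → (b, x) ∈ T) → (a, x) ∈ T

/-- `T` is superclosed: a pruned and `<κ`-closed tree. -/
def IsSuperclosedTree (κ : Cardinal.{u}) (T : Set (TreeSeq κ)) : Prop :=
  IsTreeOn κ T ∧ TreePruned κ T ∧ TreeLtClosed κ T

/-- A subset of the generalized Baire space is superclosed if it is the body of a
superclosed tree. -/
def IsSuperclosedSet (κ : Cardinal.{u}) (C : Set (GenBaire κ)) : Prop :=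
  ∃ T : Set (TreeSeq κ), IsSuperclosedTree κ T ∧ C = TreeBody κ T

/-- The `a`-th level of a tree `T` on `κ`. -/
def TreeLev (κ : Cardinal.{u}) (T : Set (TreeSeq κ)) (a : κ.ord.ToType) :
    Set ({b : κ.ord.ToType // b < a} → κ.ord.ToType) :=
  {s | ∃ x, (a, x) ∈ T ∧ ∀ b : {b : κ.ord.ToType // b < a}, x b.1 = s b}

/-- κ has the tree property: every tree on κ all of whose levels are nonempty of size `< κ`
has a (cofinal) branch. -/
def TreeProperty (κ : Cardinal.{u}) : Prop :=
  ∀ T : Set (TreeSeq κ), IsTreeOn κ T →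
    (∀ a, (TreeLev κ T a).Nonempty ∧ #(TreeLev κ T a) < κ) →
    ∃ x : κ.ord.ToType → κ.ord.ToType, ∀ a, (a, x) ∈ T

/-- κ is (strongly) inaccessible. -/
def Inaccessible (κ : Cardinal.{u}) : Prop :=
  ℵ₀ < κ ∧ κ.IsRegular ∧ ∀ μ : Cardinal.{u}, μ < κ → (2 : Cardinal.{u}) ^ μ < κ

/-- κ is weakly compact: inaccessible with the tree property. -/
def WeaklyCompact (κ : Cardinal.{u}) : Prop := Inaccessible κ ∧ TreeProperty κ

/-! ### κ-Borel sets -/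

/-- The κ-Borel subsets of a topological space: the smallest family containing the open
sets and closed under complements and unions of at most κ-many sets. -/
inductive KBorel (κ : Cardinal.{u}) {X : Type u} [TopologicalSpace X] : Set X → Prop
  | of_isOpen (U : Set X) : IsOpen U → KBorel κ U
  | compl (S : Set X) : KBorel κ S → KBorel κ Sᶜ
  | iUnion (ι : Type u) (f : ι → Set X) : #ι ≤ κ → (∀ i, KBorel κ (f i)) → KBorel κ (⋃ i, f i)

/-! ### 𝔾-metric spaces -/

section GMetric

variable (G : Type u) [AddCommGroup G] [LinearOrder G] [IsOrderedAddMonoid G]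

/-- The positive cone of `G` has coinitiality `κ`: there is a coinitial set of positive
elements of size `≤ κ`, and no such set of size `< κ`. -/
def HasDegree (κ : Cardinal.{u}) : Prop :=
  (∃ S : Set G, (∀ ε ∈ S, 0 < ε) ∧ (∀ δ : G, 0 < δ → ∃ ε ∈ S, ε ≤ δ) ∧ #S ≤ κ) ∧
  (∀ S : Set G, (∀ ε ∈ S, 0 < ε) → (∀ δ : G, 0 < δ → ∃ ε ∈ S, ε ≤ δ) → κ ≤ #S)

variable {G}

/-- `d` is a `𝔾`-metric on `X`. -/
structure IsGMetric {X : Type u} (d : X → X → G) : Prop where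
  nonneg : ∀ x y, 0 ≤ d x y
  eq_zero_iff : ∀ x y, d x y = 0 ↔ x = y
  symm : ∀ x y, d x y = d y x
  triangle : ∀ x y z, d x z ≤ d x y + d y z

/-- The open ball of center `x` and radius `ε`. -/
def GBall {X : Type u} (d : X → X → G) (x : X) (ε : G) : Set X := {y | d x y < ε}

/-- The topology induced by a `𝔾`-metric. -/
def GMetricTopology {X : Type u} (d : X → X → G) : TopologicalSpace X :=
  TopologicalSpace.generateFrom {U | ∃ x ε, 0 < ε ∧ U = GBall d x ε}

/-- The `𝔾`-metric `d` is compatible with the topology of `X`. -/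
def GCompatible {X : Type u} [t : TopologicalSpace X] (d : X → X → G) : Prop :=
  GMetricTopology d = t

/-- A `κ`-sequence is `d`-Cauchy. -/
def GCauchy (κ : Cardinal.{u}) {X : Type u} (d : X → X → G) (x : κ.ord.ToType → X) : Prop :=
  ∀ ε : G, 0 < ε → ∃ a, ∀ b, a ≤ b → ∀ c, a ≤ c → d (x b) (x c) < ε

/-- A `κ`-sequence `d`-converges to `y`. -/
def GConvergesTo (κ : Cardinal.{u}) {X : Type u} (d : X → X → G)
    (x : κ.ord.ToType → X) (y : X) : Prop :=
  ∀ ε : G, 0 < ε → ∃ a, ∀ b, a ≤ b → d (x b) y < ε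

/-- `d` is Cauchy-complete: every `d`-Cauchy `κ`-sequence converges. -/
def GCauchyComplete (κ : Cardinal.{u}) {X : Type u} (d : X → X → G) : Prop :=
  ∀ x : κ.ord.ToType → X, GCauchy κ d x → ∃ y, GConvergesTo κ d x y

/-- `X` is `𝔾`-metrizable: it admits a compatible `𝔾`-metric. -/
def GMetrizable (G : Type u) [AddCommGroup G] [LinearOrder G] [IsOrderedAddMonoid G]
    (X : Type u) [TopologicalSpace X] : Prop :=
  ∃ d : X → X → G, IsGMetric d ∧ GCompatible d

/-- `X` is `𝔾`-Polish: it has weight `≤ κ` and admits a compatible Cauchy-complete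
`𝔾`-metric. -/
def GPolish (G : Type u) [AddCommGroup G] [LinearOrder G] [IsOrderedAddMonoid G] (κ : Cardinal.{u})
    (X : Type u) [TopologicalSpace X] : Prop :=
  HasWeightLE κ X ∧ ∃ d : X → X → G, IsGMetric d ∧ GCompatible d ∧ GCauchyComplete κ d

/-- `d` is spherically complete: every (nonempty) ⊆-decreasing transfinite sequence of open
`d`-balls has nonempty intersection. -/
def SphericallyComplete {X : Type u} (d : X → X → G) : Prop :=
  ∀ o : Ordinal.{u}, o ≠ 0 → ∀ c : o.ToType → Set X,
    (∀ i, ∃ x ε, 0 < ε ∧ c i = GBall d x ε) →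
    (∀ i j, i ≤ j → c j ⊆ c i) → (⋂ i, c i).Nonempty

/-- `d` is spherically `<κ`-complete: every (nonempty) ⊆-decreasing sequence of open
`d`-balls of length `< κ` has nonempty intersection. -/
def SphericallyLtComplete (κ : Cardinal.{u}) {X : Type u} (d : X → X → G) : Prop :=
  ∀ o : Ordinal.{u}, o ≠ 0 → o < κ.ord → ∀ c : o.ToType → Set X,
    (∀ i, ∃ x ε, 0 < ε ∧ c i = GBall d x ε) →
    (∀ i j, i ≤ j → c j ⊆ c i) → (⋂ i, c i).Nonempty

/-- `X` is a spherically complete `𝔾`-Polish space. -/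
def GPolishSphericallyComplete (G : Type u) [AddCommGroup G] [LinearOrder G] [IsOrderedAddMonoid G] (κ : Cardinal.{u})
    (X : Type u) [TopologicalSpace X] : Prop :=
  HasWeightLE κ X ∧
    ∃ d : X → X → G, IsGMetric d ∧ GCompatible d ∧ GCauchyComplete κ d ∧ SphericallyComplete d

/-- `X` is a spherically `<κ`-complete `𝔾`-Polish space. -/
def GPolishSphericallyLtComplete (G : Type u) [AddCommGroup G] [LinearOrder G] [IsOrderedAddMonoid G] (κ : Cardinal.{u})
    (X : Type u) [TopologicalSpace X] : Prop :=
  HasWeightLE κ X ∧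
    ∃ d : X → X → G, IsGMetric d ∧ GCompatible d ∧ GCauchyComplete κ d ∧
      SphericallyLtComplete κ d

end GMetric

/-! ### κ-Borel spaces -/

/-- `ℬ` is a `κ⁺`-algebra on `X`: closed under complements and unions of at most
κ-many sets. -/
def IsKplusAlgebra (κ : Cardinal.{u}) {X : Type u} (ℬ : Set (Set X)) : Prop :=
  (∀ S ∈ ℬ, Sᶜ ∈ ℬ) ∧
  (∀ (ι : Type u) (f : ι → Set X), #ι ≤ κ → (∀ i, f i ∈ ℬ) → (⋃ i, f i) ∈ ℬ)

/-- `ℬ` separates the points of `X`. -/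
def SepPoints {X : Type u} (ℬ : Set (Set X)) : Prop :=
  ∀ x y : X, x ≠ y → ∃ S ∈ ℬ, x ∈ S ∧ y ∉ S

/-- `(X, ℬ)` is a κ-Borel space: a `κ⁺`-algebra that separates points and is generated
(as a `κ⁺`-algebra) by a subfamily of size `≤ κ`. -/
def IsKBorelSpace (κ : Cardinal.{u}) {X : Type u} (ℬ : Set (Set X)) : Prop :=
  IsKplusAlgebra κ ℬ ∧ SepPoints ℬ ∧
    ∃ 𝒢 ⊆ ℬ, #𝒢 ≤ κ ∧
      ∀ ℬ' : Set (Set X), IsKplusAlgebra κ ℬ' → 𝒢 ⊆ ℬ' → ℬ ⊆ ℬ'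

/-- The restriction `ℬ↾A` of a family of subsets of `X` to `A ⊆ X`. -/
def RestrictFam {X : Type u} (ℬ : Set (Set X)) (A : Set X) : Set (Set ↥A) :=
  {T | ∃ S ∈ ℬ, T = Subtype.val ⁻¹' S}

/-- The family of κ-Borel sets of a topological space. -/
def KBorelFam (κ : Cardinal.{u}) (X : Type u) [TopologicalSpace X] : Set (Set X) :=
  {S | KBorel κ S}

/-- `e` is a κ-Borel isomorphism between `(X, ℬ)` and `(Y, 𝒞)`: a bijection under which
images and preimages of distinguished sets are distinguished. -/
def IsKBorelSpaceIso {X Y : Type u} (ℬ : Set (Set X)) (𝒞 : Set (Set Y)) (e : X ≃ Y) : Prop :=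
  (∀ S ∈ ℬ, e '' S ∈ 𝒞) ∧ (∀ S ∈ 𝒞, e ⁻¹' S ∈ ℬ)

/-- `(X, ℬ)` is a standard κ-Borel space: it is a κ-Borel space which is κ-Borel isomorphic
to a κ-Borel subset of the generalized Baire space (with the restricted κ-Borel structure). -/
def IsStandardKBorel (κ : Cardinal.{u}) {X : Type u} (ℬ : Set (Set X)) : Prop :=
  IsKBorelSpace κ ℬ ∧
    ∃ B₀ : Set (GenBaire κ), KBorel κ B₀ ∧
      ∃ e : X ≃ ↥B₀, IsKBorelSpaceIso ℬ (RestrictFam (KBorelFam κ (GenBaire κ)) B₀) e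

/-!
Code `x : κ → κ` by the transfinite concatenation of the blocks `0^(x α) 1`: the block of `x α`
starts at `blockStart x α = ⨆ β < α, marker x β + 1`, and its `1` sits at
`marker x α = blockStart x α + x α`. Since `κ` is regular, all these positions stay below `κ`,
and they are cofinal in it. Conversely, a cofinal set of `1`s has order type `κ`, and `x` is
recovered from its increasing enumeration `f` as the gaps `f α - ⨆ β < α, f β + 1`. The code
below `blockStart x a` determines and is determined by `x` below `a`, which gives continuity in
both directions.
-/

open Ordinal Filter Topology

section BoundedTopology

variable {ι : Type u} [LinearOrder ι] {A : Type v}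

theorem eqOn_Iio_mem_nhds (a : ι) (z : ι → A) :
    {x | EqOn x z (Iio a)} ∈ @nhds (ι → A) (BoundedTopology ι A) z :=
  @IsOpen.mem_nhds _ (BoundedTopology ι A) _ _
    (TopologicalSpace.isOpen_generateFrom_of_mem ⟨a, z, rfl⟩) fun _ _ => rfl

theorem continuous_boundedTopology {X : Type*} [TopologicalSpace X] {f : X → ι → A}
    (h : ∀ x a, ∀ᶠ x' in 𝓝 x, EqOn (f x') (f x) (Iio a)) :
    Continuous[_, BoundedTopology ι A] f := by
  refine continuous_generateFrom_iff.2 ?_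
  rintro _ ⟨a, z, rfl⟩
  refine isOpen_iff_mem_nhds.2 fun x hx => ?_
  filter_upwards [h x a] with x' hx' b hb
  exact (hx' hb).trans (hx b hb)

end BoundedTopology

section Concatenation

variable {x x' : Ordinal.{u} → Ordinal.{u}} {α β γ a : Ordinal.{u}}

noncomputable def marker (x : Ordinal.{u} → Ordinal.{u}) (α : Ordinal.{u}) : Ordinal.{u} :=
  (⨆ β : Iio α, marker x β + 1) + x α
termination_by α
decreasing_by exact β.2

noncomputable def blockStart (x : Ordinal.{u} → Ordinal.{u}) (α : Ordinal.{u}) : Ordinal.{u} :=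
  ⨆ β : Iio α, marker x β + 1

theorem marker_eq (x : Ordinal.{u} → Ordinal.{u}) (α : Ordinal.{u}) :
    marker x α = blockStart x α + x α := by
  rw [marker, blockStart]

theorem blockStart_le_marker (x : Ordinal.{u} → Ordinal.{u}) (α : Ordinal.{u}) :
    blockStart x α ≤ marker x α :=
  (marker_eq x α).symm ▸ le_self_add

theorem marker_lt_blockStart (h : β < α) : marker x β < blockStart x α :=
  Ordinal.lt_iSup_add_one (fun β : Iio α => marker x β) ⟨β, h⟩

theorem marker_strictMono (x : Ordinal.{u} → Ordinal.{u}) : StrictMono (marker x) :=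
  fun _ _ h => (marker_lt_blockStart h).trans_le (blockStart_le_marker x _)

theorem blockStart_strictMono (x : Ordinal.{u} → Ordinal.{u}) : StrictMono (blockStart x) :=
  fun _ _ h => (blockStart_le_marker x _).trans_lt (marker_lt_blockStart h)

theorem blockStart_congr (h : EqOn x' x (Iio α)) : blockStart x' α = blockStart x α := by
  induction α using WellFoundedLT.induction with
  | ind α IH =>
    refine iSup_congr fun β => ?_
    rw [marker_eq, marker_eq, IH β β.2 (h.mono (Iio_subset_Iio β.2.le)), h β.2]

theorem marker_congr (h : EqOn x' x (Iio a)) (hα : α < a) : marker x' α = marker x α := by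
  rw [marker_eq, marker_eq, blockStart_congr (h.mono (Iio_subset_Iio hα.le)), h hα]

theorem not_mem_range_marker (h₁ : blockStart x α ≤ γ) (h₂ : γ < marker x α) :
    γ ∉ range (marker x) := by
  rintro ⟨β, rfl⟩
  rcases lt_trichotomy β α with hβα | rfl | hαβ
  · exact h₁.not_gt (marker_lt_blockStart hβα)
  · exact h₂.false
  · exact h₂.not_gt (marker_strictMono x hαβ)

theorem mem_range_iff_of_lt {f : Ordinal.{u} → Ordinal.{u}} (hf : StrictMono f) {o : Ordinal.{u}}
    (hγ : γ < o) : γ ∈ range f ↔ ∃ α < o, f α = γ :=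
  ⟨fun ⟨α, hα⟩ => ⟨α, hf.le_apply.trans_lt (hα ▸ hγ), hα⟩, fun ⟨α, _, hα⟩ => ⟨α, hα⟩⟩

theorem mem_range_marker_iff (hγ : γ < blockStart x a) :
    γ ∈ range (marker x) ↔ ∃ α < a, marker x α = γ := by
  refine ⟨fun ⟨α, hα⟩ => ⟨α, ?_, hα⟩, fun ⟨α, _, hα⟩ => ⟨α, hα⟩⟩
  by_contra! haα
  exact hγ.not_ge (hα ▸ ((blockStart_strictMono x).monotone haα).trans (blockStart_le_marker x α))

theorem eqOn_Iio_iff_range_marker :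
    EqOn x' x (Iio a) ↔
      ∀ γ < blockStart x a, (γ ∈ range (marker x') ↔ γ ∈ range (marker x)) := by
  constructor
  · intro h γ hγ
    have hγ' : γ < blockStart x' a := blockStart_congr h ▸ hγ
    rw [mem_range_marker_iff hγ, mem_range_marker_iff hγ']
    exact exists_congr fun α => and_congr_right fun hα => by rw [marker_congr h hα]
  · intro h α (hα : α < a)
    -- At the least disagreement `α` both blocks start at the same place, so the smaller of the
    -- two markers at `α` is a `1` of one code lying in the `0`-block of the other.
    induction α using WellFoundedLT.induction with
    | ind α IH =>
      have hbs : blockStart x' α = blockStart x α :=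
        blockStart_congr fun β hβ => IH β hβ (hβ.trans hα)
      by_contra hne
      rcases lt_or_gt_of_ne hne with hlt | hgt
      · have hlt' : marker x' α < marker x α := by rw [marker_eq, marker_eq, hbs]; gcongr
        refine not_mem_range_marker (x := x) (hbs ▸ blockStart_le_marker x' α) hlt' ?_
        exact (h _ (hlt'.trans (marker_lt_blockStart hα))).1 ⟨α, rfl⟩
      · have hlt' : marker x α < marker x' α := by rw [marker_eq, marker_eq, hbs]; gcongr
        refine not_mem_range_marker (x := x') (hbs ▸ blockStart_le_marker x α) hlt' ?_
        exact (h _ (marker_lt_blockStart hα)).2 ⟨α, rfl⟩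

end Concatenation

noncomputable def gap (f : Ordinal.{u} → Ordinal.{u}) (α : Ordinal.{u}) : Ordinal.{u} :=
  f α - ⨆ β : Iio α, f β + 1

theorem marker_gap {f : Ordinal.{u} → Ordinal.{u}} (hf : StrictMono f) : marker (gap f) = f := by
  funext α
  induction α using WellFoundedLT.induction with
  | ind α IH =>
    have hstart : blockStart (gap f) α = ⨆ β : Iio α, f β + 1 :=
      iSup_congr fun β => by rw [IH β β.2]
    rw [marker_eq, hstart, gap]
    exact Ordinal.add_sub_cancel_of_le (Ordinal.iSup_add_one_le fun β => hf β.2)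

section Regular

variable {κ : Cardinal.{u}} (hreg : κ.IsRegular)
include hreg

theorem iSup_Iio_add_one_lt_ord {f : Ordinal.{u} → Ordinal.{u}} {α : Ordinal.{u}}
    (hα : α < κ.ord) (hf : ∀ β < α, f β < κ.ord) : ⨆ β : Iio α, f β + 1 < κ.ord :=
  Ordinal.lift_iSup_add_one_lt_of_lt_cof
    (by rwa [← lift_cof, hreg.cof_ord, Cardinal.mk_Iio_ordinal, Cardinal.lift_lift,
      Cardinal.lift_lt, ← Cardinal.lt_ord]) fun β => hf β β.2

theorem marker_lt_ord {x : Ordinal.{u} → Ordinal.{u}} (hx : ∀ β < κ.ord, x β < κ.ord) :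
    ∀ α < κ.ord, marker x α < κ.ord := by
  intro α hα
  induction α using WellFoundedLT.induction with
  | ind α IH =>
    rw [marker_eq]
    exact isPrincipal_add_ord hreg.aleph0_le
      (iSup_Iio_add_one_lt_ord hreg hα fun β hβ => IH β hβ (hβ.trans hα)) (hx α hα)

theorem blockStart_lt_ord {x : Ordinal.{u} → Ordinal.{u}} (hx : ∀ β < κ.ord, x β < κ.ord)
    {α : Ordinal.{u}} (hα : α < κ.ord) : blockStart x α < κ.ord :=
  (blockStart_le_marker x α).trans_lt (marker_lt_ord hreg hx α hα)

/-- Adding `Ici κ.ord` makes the set unbounded, as `enumOrd` requires, without changing its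
enumeration below `κ`. -/
theorem enumOrd_union_Ici_lt_ord {P : Set Ordinal.{u}}
    (hP : ∀ γ < κ.ord, ∃ δ ∈ P, γ ≤ δ ∧ δ < κ.ord) :
    ∀ α < κ.ord, enumOrd (P ∪ Ici κ.ord) α < κ.ord := by
  intro α hα
  induction α using WellFoundedLT.induction with
  | ind α IH =>
    obtain ⟨δ, hδP, hle, hδ⟩ :=
      hP _ (iSup_Iio_add_one_lt_ord hreg hα fun β hβ => IH β hβ (hβ.trans hα))
    refine (enumOrd_le_of_forall_lt (Or.inl hδP) fun β hβ => ?_).trans_lt hδ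
    exact (Ordinal.lt_iSup_add_one (fun β : Iio α => enumOrd (P ∪ Ici κ.ord) β) ⟨β, hβ⟩).trans_le
      hle

end Regular

section ToType

variable {o : Ordinal.{u}}

theorem coe_toType_lt (c : o.ToType) : (c : Ordinal) < o := (ToType.toOrd c).2

@[simp]
theorem coe_toType_inj {c d : o.ToType} : (c : Ordinal) = d ↔ c = d :=
  Subtype.coe_inj.trans ToType.mk.symm.apply_eq_iff_eq

@[simp]
theorem coe_toType_lt_coe {c d : o.ToType} : (c : Ordinal) < d ↔ c < d :=
  Subtype.coe_lt_coe.trans ToType.mk.symm.lt_iff_lt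

@[simp]
theorem coe_toType_le_coe {c d : o.ToType} : (c : Ordinal) ≤ d ↔ c ≤ d :=
  Subtype.coe_le_coe.trans ToType.mk.symm.le_iff_le

theorem coe_toType_mk {γ : Ordinal.{u}} (h : γ < o) :
    ((ToType.mk ⟨γ, h⟩ : o.ToType) : Ordinal) = γ := by
  simp

theorem forall_lt_toType_iff {p : Ordinal.{u} → Prop} (δ : o.ToType) :
    (∀ c : o.ToType, c < δ → p c) ↔ ∀ γ < (δ : Ordinal), p γ := by
  refine ⟨fun h γ hγ => ?_, fun h c hc => h c (coe_toType_lt_coe.2 hc)⟩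
  have hγo : γ < o := hγ.trans (coe_toType_lt δ)
  simpa using h (ToType.mk ⟨γ, hγo⟩) (coe_toType_lt_coe.1 (by simpa using hγ))

end ToType

section Encoding

variable {κ : Cardinal.{u}}

noncomputable def toOrdFun (x : GenBaire κ) (γ : Ordinal.{u}) : Ordinal.{u} :=
  if h : γ < κ.ord then x (ToType.mk ⟨γ, h⟩) else 0

@[simp]
theorem toOrdFun_coe (x : GenBaire κ) (c : κ.ord.ToType) : toOrdFun x c = x c := by
  rw [toOrdFun, dif_pos (coe_toType_lt c), ToType.mk.apply_symm_apply]

theorem toOrdFun_lt (x : GenBaire κ) : ∀ γ < κ.ord, toOrdFun x γ < κ.ord := by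
  intro γ hγ
  rw [toOrdFun, dif_pos hγ]
  exact coe_toType_lt _

theorem eqOn_toOrdFun_iff {x x' : GenBaire κ} {a : κ.ord.ToType} :
    EqOn (toOrdFun x') (toOrdFun x) (Iio (a : Ordinal)) ↔ EqOn x' x (Iio a) := by
  simp only [EqOn, mem_Iio]
  rw [← forall_lt_toType_iff]
  simp

open Classical in
noncomputable def encode (x : GenBaire κ) : GenCantor κ :=
  fun c => decide ((c : Ordinal) ∈ range (marker (toOrdFun x)))

theorem encode_eq_true_iff (x : GenBaire κ) (c : κ.ord.ToType) :
    encode x c = true ↔ (c : Ordinal) ∈ range (marker (toOrdFun x)) := by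
  simp [encode]

variable (hreg : κ.IsRegular)
include hreg

theorem encode_cofinal (x : GenBaire κ) (a : κ.ord.ToType) : ∃ b, a ≤ b ∧ encode x b = true := by
  have hm := marker_lt_ord hreg (toOrdFun_lt x) a (coe_toType_lt a)
  refine ⟨ToType.mk ⟨_, hm⟩, ?_, ?_⟩
  · rw [← coe_toType_le_coe, coe_toType_mk]
    exact (marker_strictMono _).le_apply
  · rw [encode_eq_true_iff, coe_toType_mk]
    exact ⟨a, rfl⟩

theorem exists_eqOn_encode_iff (x : GenBaire κ) (a : κ.ord.ToType) :
    ∃ δ, a ≤ δ ∧ ∀ x' : GenBaire κ, EqOn x' x (Iio a) ↔ EqOn (encode x') (encode x) (Iio δ) := by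
  have hδ := blockStart_lt_ord hreg (toOrdFun_lt x) (coe_toType_lt a)
  refine ⟨ToType.mk ⟨_, hδ⟩, ?_, fun x' => ?_⟩
  · rw [← coe_toType_le_coe, coe_toType_mk]
    exact (blockStart_strictMono _).le_apply
  · rw [← eqOn_toOrdFun_iff, eqOn_Iio_iff_range_marker]
    nth_rw 1 [← coe_toType_mk hδ]
    refine (forall_lt_toType_iff _).symm.trans (forall₂_congr fun c _ => ?_)
    rw [Bool.eq_iff_iff, encode_eq_true_iff, encode_eq_true_iff]

theorem exists_encode_eq {y : GenCantor κ} (hy : ∀ a, ∃ b, a ≤ b ∧ y b = true) :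
    ∃ x, encode x = y := by
  set P : Set Ordinal.{u} := {γ | ∃ c, y c = true ∧ (c : Ordinal) = γ}
  have hP : ∀ γ < κ.ord, ∃ δ ∈ P, γ ≤ δ ∧ δ < κ.ord := by
    intro γ hγ
    obtain ⟨b, hab, hb⟩ := hy (ToType.mk ⟨γ, hγ⟩)
    exact ⟨b, ⟨b, hb, rfl⟩, by simpa using coe_toType_le_coe.2 hab, coe_toType_lt b⟩
  have hunb : ¬ BddAbove (P ∪ Ici κ.ord) := fun h => not_bddAbove_Ici _ (h.mono subset_union_right)
  set f := enumOrd (P ∪ Ici κ.ord)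
  have hf : StrictMono f := enumOrd_strictMono hunb
  have hfκ := enumOrd_union_Ici_lt_ord hreg hP
  have hgap : ∀ α < κ.ord, gap f α < κ.ord := fun α hα =>
    (Ordinal.sub_le_self _ _).trans_lt (hfκ α hα)
  set x : GenBaire κ := fun i => ToType.mk ⟨gap f i, hgap i (coe_toType_lt i)⟩
  have hx : EqOn (toOrdFun x) (gap f) (Iio κ.ord) := fun γ (hγ : γ < κ.ord) => by
    simp [toOrdFun, x, hγ]
  refine ⟨x, funext fun c => ?_⟩
  rw [Bool.eq_iff_iff, encode_eq_true_iff]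
  calc (c : Ordinal) ∈ range (marker (toOrdFun x))
      ↔ ∃ α < κ.ord, marker (toOrdFun x) α = c :=
        mem_range_iff_of_lt (marker_strictMono _) (coe_toType_lt c)
    _ ↔ ∃ α < κ.ord, f α = c :=
        exists_congr fun α => and_congr_right fun hα => by
          rw [marker_congr hx hα, marker_gap hf]
    _ ↔ (c : Ordinal) ∈ P ∪ Ici κ.ord := by
        rw [← mem_range_iff_of_lt hf (coe_toType_lt c), range_enumOrd hunb]
    _ ↔ y c = true := by simp [P, coe_toType_lt c]

theorem encode_injective : Function.Injective (encode : GenBaire κ → GenCantor κ) := by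
  have := Cardinal.noMaxOrder hreg.aleph0_le
  intro x' x h
  funext b
  obtain ⟨a, hba⟩ := exists_gt b
  obtain ⟨δ, -, hδ⟩ := exists_eqOn_encode_iff hreg x a
  exact (hδ x').2 (h ▸ eqOn_refl _ _) hba

theorem continuous_encode : Continuous (encode : GenBaire κ → GenCantor κ) := by
  refine continuous_boundedTopology fun x a => ?_
  obtain ⟨δ, haδ, hδ⟩ := exists_eqOn_encode_iff hreg x a
  filter_upwards [eqOn_Iio_mem_nhds a x] with x' hx'
  exact ((hδ x').1 hx').mono (Iio_subset_Iio haδ)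

theorem continuous_of_continuous_encode_comp {X : Type*} [TopologicalSpace X]
    {g : X → GenBaire κ} (hg : Continuous (encode ∘ g)) : Continuous g := by
  refine continuous_boundedTopology fun p a => ?_
  obtain ⟨δ, -, hδ⟩ := exists_eqOn_encode_iff hreg (g p) a
  filter_upwards [hg.continuousAt.preimage_mem_nhds (eqOn_Iio_mem_nhds δ (encode (g p)))]
    with p' hp'
  exact (hδ (g p')).2 hp'

end Encoding

theorem stmt_1_general (κ : Cardinal.{u}) (hreg : κ.IsRegular) :
    Nonempty (GenBaire κ ≃ₜ {x : GenCantor κ | ∀ a, ∃ b, a ≤ b ∧ x b = true}) := by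
  let F : GenBaire κ → {x : GenCantor κ | ∀ a, ∃ b, a ≤ b ∧ x b = true} :=
    fun x => ⟨encode x, encode_cofinal hreg x⟩
  have hF : F.Bijective :=
    ⟨fun x x' h => encode_injective hreg (congrArg Subtype.val h),
      fun y => (exists_encode_eq hreg y.2).imp fun x hx => Subtype.ext hx⟩
  let e := Equiv.ofBijective F hF
  refine ⟨{ e with
    continuous_toFun := (continuous_encode hreg).subtype_mk _
    continuous_invFun := continuous_of_continuous_encode_comp hreg ?_ }⟩
  convert continuous_subtype_val
  funext y
  exact congrArg Subtype.val (e.apply_symm_apply y)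

/-- The generalized Baire space is homeomorphic to the subspace of the
generalized Cantor space of functions taking the value 1 cofinally often. -/
theorem stmt_1 (κ : Cardinal.{u}) (hreg : κ.IsRegular) (hunc : ℵ₀ < κ)
    (hpow : (2 : Cardinal.{u}) ^< κ = κ) :
    Nonempty (GenBaire κ ≃ₜ {x : GenCantor κ | ∀ a, ∃ b, a ≤ b ∧ x b = true}) :=
  stmt_1_general κ hreg

end GDST
end

section
/- If X is an fSC_κ-space and Y ⊆ X is a G_δ^κ subset, then Y with the subspace topology is an fSC_κ-space as well. -/
universe u v

open Cardinal Set

namespace GDST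

/-!
Write `Y = ⋂ α, U α` with `U α` open. Player II in the game on `Y` runs a winning strategy
`σ` for the game on `X` in the background. When I plays `(A, y)` at round `α` of the game on
`Y`, where `A = Y ∩ W ∩ ⋂_{β<α} V_β` for some open `W` and `V_β` are the moves of `σ` so far, the
simulated player I plays `(W ∩ U α ∩ ⋂_{β<α} V_β, y)` in `X`, and II answers with the trace on
`Y` of `σ`'s reply `V_α`. Both runs have the same limit intersections up to tracing on `Y`, and
a point of `⋂ α, V_α` lies in every `U α`, hence in `Y`.
-/

lemma interBelow_preimage {ι α β : Type u} [LT ι] (s : α → β) (V : ι → Set β) (a : ι) :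
    InterBelow (fun b => s ⁻¹' V b) a = s ⁻¹' InterBelow V a := by
  simp only [InterBelow, preimage_iInter]

lemma HasWeightLE.subtype {κ : Cardinal.{u}} {X : Type u} [TopologicalSpace X]
    (h : HasWeightLE κ X) (Y : Set X) : HasWeightLE κ Y := by
  obtain ⟨B, hB, hcard⟩ := h
  exact ⟨preimage Subtype.val '' B, hB.isInducing .subtypeVal, mk_image_le.trans hcard⟩

section ResponseRun

variable {κ : Cardinal.{u}} {X : Type u} {σ : Strategy κ X}

/-- The run of player I against `σ` in which I's move at round `a` is `F a T`, where `T` is the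
intersection of II's moves so far. The moves at rounds `b ≥ a` that are fed to `σ` while
defining round `a` are placeholders, which `σ` cannot see by `IsIIStrategy`. -/
noncomputable def responseRun (σ : Strategy κ X) (F : κ.ord.ToType → Set X → Set X × X)
    (a : κ.ord.ToType) : Set X × X :=
  F a (InterBelow (σ fun b => if _h : b < a then responseRun σ F b else F b ∅) a)
termination_by a
decreasing_by assumption

lemma responseRun_eq (hσ : IsIIStrategy σ) (F : κ.ord.ToType → Set X → Set X × X)
    (a : κ.ord.ToType) :
    responseRun σ F a = F a (InterBelow (σ (responseRun σ F)) a) := by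
  rw [responseRun]
  congr 1
  refine iInter₂_congr fun b hb => hσ _ _ b fun c hc => ?_
  exact dif_pos (hc.trans_lt hb)

lemma responseRun_congr (hσ : IsIIStrategy σ) {F F' : κ.ord.ToType → Set X → Set X × X}
    (a : κ.ord.ToType) (hF : ∀ b ≤ a, F b = F' b) :
    responseRun σ F a = responseRun σ F' a := by
  induction a using WellFoundedLT.induction with
  | ind a ih =>
    have hrun : ∀ b < a, ∀ c ≤ b, responseRun σ F c = responseRun σ F' c :=
      fun b hb c hc => ih c (hc.trans_lt hb) fun d hd => hF d (hd.trans (hc.trans hb.le))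
    have hinter : InterBelow (σ (responseRun σ F)) a = InterBelow (σ (responseRun σ F')) a :=
      iInter₂_congr fun b hb => hσ _ _ b (hrun b hb)
    rw [responseRun_eq hσ, responseRun_eq hσ, hinter, hF a le_rfl]

end ResponseRun

section Subspace

variable {κ : Cardinal.{u}} {X : Type u} [TopologicalSpace X] {Y : Set X}

lemma relOpenIn_preimage_val_iff {T : Set X} {A : Set Y} :
    RelOpenIn (Subtype.val ⁻¹' T) A ↔ ∃ W, IsOpen W ∧ A = Subtype.val ⁻¹' (W ∩ T) := by
  constructor
  · rintro ⟨W', hW', rfl⟩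
    obtain ⟨W, hW, rfl⟩ := isOpen_induced_iff.mp hW'
    exact ⟨W, hW, preimage_inter.symm⟩
  · rintro ⟨W, hW, rfl⟩
    exact ⟨_, hW.preimage continuous_subtype_val, preimage_inter⟩

/-- Player I's move in `X` simulating the move `(A, y)` in `Y` when the sets played so far
intersect to `T` in `X`. -/
noncomputable def liftMove (U : Set X) (A : Set Y) (y : Y) (T : Set X) : Set X × X :=
  (Classical.epsilon (fun W => IsOpen W ∧ A = Subtype.val ⁻¹' (W ∩ T)) ∩ U ∩ T, y)

lemma liftMove_spec {U T : Set X} {A : Set Y} {y : Y} (hU : IsOpen U) (hyU : (y : X) ∈ U)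
    (hA : RelOpenIn (Subtype.val ⁻¹' T) A) (hy : y ∈ A) :
    RelOpenIn T (liftMove U A y T).1 ∧ (y : X) ∈ (liftMove U A y T).1 ∧
      Subtype.val ⁻¹' (liftMove U A y T).1 ⊆ A := by
  obtain ⟨hW, hAW⟩ := Classical.epsilon_spec (relOpenIn_preimage_val_iff.mp hA)
  rw [hAW] at hy
  exact ⟨⟨_, hW.inter hU, rfl⟩, ⟨⟨hy.1, hyU⟩, hy.2⟩,
    (preimage_mono (inter_subset_inter_left T inter_subset_left)).trans hAW.ge⟩

noncomputable def liftRun (σ : Strategy κ X) (U : κ.ord.ToType → Set X) (g : IMoves κ Y) :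
    IMoves κ X :=
  responseRun σ fun a T => liftMove (U a) (g a).1 (g a).2 T

noncomputable def subspaceStrategy (σ : Strategy κ X) (U : κ.ord.ToType → Set X) :
    Strategy κ Y :=
  fun g a => Subtype.val ⁻¹' σ (liftRun σ U g) a

variable {σ : Strategy κ X} {U : κ.ord.ToType → Set X}

lemma liftRun_eq (hσ : IsIIStrategy σ) (g : IMoves κ Y) (a : κ.ord.ToType) :
    liftRun σ U g a = liftMove (U a) (g a).1 (g a).2 (InterBelow (σ (liftRun σ U g)) a) :=
  responseRun_eq hσ _ a

lemma interBelow_subspaceStrategy (g : IMoves κ Y) (a : κ.ord.ToType) :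
    InterBelow (subspaceStrategy σ U g) a =
      Subtype.val ⁻¹' InterBelow (σ (liftRun σ U g)) a :=
  interBelow_preimage _ _ a

lemma IsIIStrategy.subspaceStrategy (hσ : IsIIStrategy σ) :
    IsIIStrategy (subspaceStrategy σ U : Strategy κ Y) := fun g g' a hg => by
  have hrun : ∀ b ≤ a, liftRun σ U g b = liftRun σ U g' b := fun b hb =>
    responseRun_congr hσ b fun c hc => by rw [hg c (hc.trans hb)]
  simp only [GDST.subspaceStrategy, hσ _ _ a hrun]

variable (hU : ∀ a, IsOpen (U a)) (hYU : Y ⊆ ⋂ a, U a)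
include hU hYU

lemma legalI_liftRun (hσ : IsIIStrategy σ) {g : IMoves κ Y} {a : κ.ord.ToType}
    (hI : LegalI (subspaceStrategy σ U) g a) :
    LegalI σ (liftRun σ U g) a ∧ Subtype.val ⁻¹' (liftRun σ U g a).1 ⊆ (g a).1 := by
  rw [LegalI, interBelow_subspaceStrategy] at hI
  have hyU : ((g a).2 : X) ∈ U a := mem_iInter.mp (hYU (g a).2.2) a
  obtain ⟨hrel, hy, hsub⟩ := liftMove_spec (hU a) hyU hI.1 hI.2
  rw [← liftRun_eq hσ] at hrel hsub
  exact ⟨⟨hrel, by rw [liftRun_eq hσ]; exact hy⟩, hsub⟩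

lemma legal_liftRun (hσ : WinningFair σ) {g : IMoves κ Y} (a : κ.ord.ToType)
    (hg : ∀ b ≤ a, LegalI (subspaceStrategy σ U) g b) :
    LegalI σ (liftRun σ U g) a ∧ LegalII σ (liftRun σ U g) a := by
  induction a using WellFoundedLT.induction with
  | ind a ih =>
    have hI := (legalI_liftRun hU hYU hσ.1 (hg a le_rfl)).1
    exact ⟨hI, hσ.2.1 _ a (fun b hb => ih b hb fun c hc => hg c (hc.trans hb.le)) hI⟩

lemma legalII_subspaceStrategy (hσ : WinningFair σ) {g : IMoves κ Y} {a : κ.ord.ToType}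
    (hg : LegalBelow (subspaceStrategy σ U) g a) (hI : LegalI (subspaceStrategy σ U) g a) :
    LegalII (subspaceStrategy σ U) g a := by
  obtain ⟨hfI, hsub⟩ := legalI_liftRun hU hYU hσ.1 hI
  have hbelow : LegalBelow σ (liftRun σ U g) a := fun b hb =>
    legal_liftRun hU hYU hσ b fun c hc => (hg c (hc.trans_lt hb)).1
  obtain ⟨⟨W, hW, hσW⟩, hy, hσsub⟩ := hσ.2.1 _ a hbelow hfI
  have hpoint : (liftRun σ U g a).2 = (g a).2 := by rw [liftRun_eq hσ.1]; rfl
  refine ⟨?_, show ((g a).2 : X) ∈ _ from hpoint ▸ hy, (preimage_mono hσsub).trans hsub⟩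
  rw [interBelow_subspaceStrategy]
  exact relOpenIn_preimage_val_iff.mpr ⟨W, hW, congrArg _ hσW⟩

lemma WinningFair.subspaceStrategy (hσ : WinningFair σ) (hUY : ⋂ a, U a ⊆ Y) :
    WinningFair (subspaceStrategy σ U : Strategy κ Y) := by
  refine ⟨hσ.1.subspaceStrategy, fun g a => legalII_subspaceStrategy hU hYU hσ, fun g hg => ?_⟩
  have hlegal : ∀ a, LegalI σ (liftRun σ U g) a ∧ LegalII σ (liftRun σ U g) a := fun a =>
    legal_liftRun hU hYU hσ a fun b _ => (hg b).1
  rcases hσ.2.2 _ hlegal with ⟨a, hlim, hempty⟩ | ⟨z, hz⟩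
  · exact .inl ⟨a, hlim, by rw [interBelow_subspaceStrategy, hempty, preimage_empty]⟩
  · have hzU : z ∈ ⋂ a, U a := mem_iInter.mpr fun a => by
      have hzV := (hlegal a).2.2.2 (mem_iInter.mp hz a)
      rw [liftRun_eq hσ.1] at hzV
      exact hzV.1.2
    exact .inr ⟨⟨z, hUY hzU⟩, mem_iInter.mpr fun a => mem_iInter.mp hz a⟩

end Subspace

theorem stmt_2_general (κ : Cardinal.{u}) (X : Type u) [TopologicalSpace X]
    (hX : fSCSpace κ X) (Y : Set X) (hY : IsGDeltaKappa κ Y) :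
    fSCSpace κ ↥Y := by
  obtain ⟨hw, σ, hσ⟩ := hX
  obtain ⟨U, hU, rfl⟩ := hY
  exact ⟨hw.subtype _, subspaceStrategy σ U, hσ.subspaceStrategy hU subset_rfl subset_rfl⟩

/-- A G_δ^κ subset of an fSC_κ-space is an fSC_κ-space. -/
theorem stmt_2 (κ : Cardinal.{u}) (hreg : κ.IsRegular) (hunc : ℵ₀ < κ)
    (hpow : (2 : Cardinal.{u}) ^< κ = κ)
    (X : Type u) [TopologicalSpace X] [T2Space X] [RegularSpace X]
    (hX : fSCSpace κ X) (Y : Set X) (hY : IsGDeltaKappa κ Y) :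
    fSCSpace κ ↥Y :=
  stmt_2_general κ X hX Y hY

end GDST
end

section
/- (Sikorski) Let X be a regular Hausdorff space of weight at most κ and let 𝔾 be a linearly ordered abelian group of degree κ. The following are equivalent: (a) X is κ-additive; (b) X is 𝔾-metrizable, i.e. admits a compatible 𝔾-metric; (c) X is homeomorphic to a subspace of the generalized Cantor space 2^κ; (d) X is homeomorphic to a subspace of the generalized Baire space κ^κ. -/
universe u v

open Cardinal Set

namespace GDST

/-!
In a κ-additive regular space, the intersection of an ω-chain of open sets with nested closures
is closed, and open by κ-additivity; so every open set contains a clopen neighbourhood of each of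
its points. Refining a basis of size κ gives a clopen basis `(C a)_{a<κ}`, and
`x ↦ (a ↦ [x ∈ C a])` embeds `X` into `2^κ`, which embeds coordinatewise into `κ^κ`.
Conversely `κ^κ` is κ-additive because κ is regular, and every `𝔾`-metric space is κ-additive
because fewer than κ positive radii have a positive lower bound. Finally `κ^κ` carries the
ultrametric `d x y = ε a`, where `a` is the first place where `x` and `y` differ and `(ε a)` is an
antitone coinitial κ-sequence in `𝔾⁺`, and `𝔾`-metrizability passes to subspaces.
-/

open TopologicalSpace Topology Filter Function

section

variable {κ : Cardinal.{u}}

theorem bddAbove_of_mk_lt (hreg : κ.IsRegular) {s : Set κ.ord.ToType} (hs : #s < κ) :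
    BddAbove s := by
  have hcof : ¬ IsCofinal s := fun h =>
    (Order.cof_le h).not_gt (by rwa [Ordinal.cof_toType, hreg.cof_ord])
  simp only [IsCofinal, not_forall, not_exists, not_and, not_le] at hcof
  obtain ⟨a, ha⟩ := hcof
  exact ⟨a, fun b hb => (ha b hb).le⟩

theorem mk_Iio_ord_toType_lt (a : κ.ord.ToType) : #(Iio a) < κ := by
  simpa using mk_Iio_lt a (by simp)

theorem forall_extend_const {α β γ : Type*} {f : α → β} {g : α → γ} {d : γ} {P : γ → Prop}
    (hg : ∀ a, P (g a)) (hd : P d) (b : β) : P (extend f g (fun _ => d) b) := by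
  classical
  rw [extend_def]
  split
  exacts [hg _, hd]

section KAdditive

variable {X Y : Type u} [TopologicalSpace X] [TopologicalSpace Y]

theorem KAdditive.isOpen_iInter (h : KAdditive κ X) {ι : Type*} {f : ι → Set X}
    (hf : #(range f) < κ) (hopen : ∀ i, IsOpen (f i)) : IsOpen (⋂ i, f i) :=
  sInter_range f ▸ h _ hf (forall_mem_range.2 hopen)

theorem KAdditive.of_isInducing {e : X → Y} (he : IsInducing e) (h : KAdditive κ Y) :
    KAdditive κ X := by
  intro S hS hopen
  choose! W hW hWe using fun U hU => isOpen_induced_iff.1 (he.eq_induced ▸ hopen U hU)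
  have hinter : ⋂₀ S = e ⁻¹' ⋂₀ (W '' S) := by
    rw [preimage_sInter, biInter_image, sInter_eq_biInter]
    exact iInter₂_congr fun U hU => (hWe U hU).symm
  rw [hinter]
  exact (h _ (mk_image_le.trans_lt hS) (forall_mem_image.2 hW)).preimage he.continuous

theorem kAdditive_of_nhds_hasBasis {ι : Type u} {p : ι → Prop} {V : X → ι → Set X}
    (hV : ∀ x, (𝓝 x).HasBasis p (V x))
    (hdir : ∀ x (s : Set ι), #s < κ → (∀ i ∈ s, p i) → ∃ j, p j ∧ ∀ i ∈ s, V x j ⊆ V x i) :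
    KAdditive κ X := by
  intro S hS hopen
  refine isOpen_iff_mem_nhds.2 fun x hx => ?_
  choose i hi hiU using fun U : S => (hV x).mem_iff.1 ((hopen U U.2).mem_nhds (hx U U.2))
  obtain ⟨j, hj, hjsub⟩ := hdir x (range i) (mk_range_le.trans_lt hS) (forall_mem_range.2 hi)
  exact (hV x).mem_iff.2
    ⟨j, hj, subset_sInter fun U hU => (hjsub _ ⟨⟨U, hU⟩, rfl⟩).trans (hiU ⟨U, hU⟩)⟩

end KAdditive

theorem exists_homeomorph_subtype_iff {X Y : Type*} [TopologicalSpace X] [TopologicalSpace Y] :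
    (∃ S : Set Y, Nonempty (X ≃ₜ S)) ↔ ∃ e : X → Y, IsEmbedding e :=
  ⟨fun ⟨_, ⟨h⟩⟩ => ⟨_, IsEmbedding.subtypeVal.comp h.isEmbedding⟩,
    fun ⟨_, he⟩ => ⟨_, ⟨he.toHomeomorph⟩⟩⟩

theorem isTopologicalBasis_boundedTopology (ι : Type u) [LinearOrder ι] [Nonempty ι]
    (A : Type v) :
    @IsTopologicalBasis (ι → A) (BoundedTopology ι A)
      {U | ∃ (a : ι) (y : ι → A), U = {x | ∀ b, b < a → x b = y b}} := by
  let := BoundedTopology ι A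
  refine ⟨?_, ?_, rfl⟩
  · rintro _ ⟨a₁, y₁, rfl⟩ _ ⟨a₂, y₂, rfl⟩ x ⟨hx₁, hx₂⟩
    refine ⟨_, ⟨max a₁ a₂, x, rfl⟩, fun b _ => rfl, fun z hz => ⟨fun b hb => ?_, fun b hb => ?_⟩⟩
    · exact (hz b (hb.trans_le (le_max_left _ _))).trans (hx₁ b hb)
    · exact (hz b (hb.trans_le (le_max_right _ _))).trans (hx₂ b hb)
  · obtain ⟨a⟩ := ‹Nonempty ι›
    exact eq_univ_of_forall fun x => ⟨_, ⟨a, x, rfl⟩, fun b _ => rfl⟩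

theorem nhds_hasAntitoneBasis_boundedTopology (ι : Type u) [LinearOrder ι] [Nonempty ι]
    (A : Type v) (x : ι → A) :
    (@nhds _ (BoundedTopology ι A) x).HasAntitoneBasis fun a => {z | ∀ b < a, z b = x b} := by
  let := BoundedTopology ι A
  refine ⟨(isTopologicalBasis_boundedTopology ι A).nhds_hasBasis.to_hasBasis ?_ ?_, ?_⟩
  · rintro _ ⟨⟨a, y, rfl⟩, hx⟩
    exact ⟨a, trivial, fun z hz b hb => (hz b hb).trans (hx b hb)⟩
  · exact fun a _ => ⟨_, ⟨⟨a, x, rfl⟩, fun b _ => rfl⟩, subset_rfl⟩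
  · exact fun a a' haa' z hz b hb => hz b (hb.trans_le haa')

theorem GenBaire.nhds_hasAntitoneBasis (hκ : κ ≠ 0) (x : GenBaire κ) :
    (𝓝 x).HasAntitoneBasis fun a => {z : GenBaire κ | ∀ b < a, z b = x b} :=
  haveI := nonempty_ord_toType hκ
  nhds_hasAntitoneBasis_boundedTopology _ _ x

theorem GenCantor.nhds_hasAntitoneBasis (hκ : κ ≠ 0) (x : GenCantor κ) :
    (𝓝 x).HasAntitoneBasis fun a => {z : GenCantor κ | ∀ b < a, z b = x b} :=
  haveI := nonempty_ord_toType hκ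
  nhds_hasAntitoneBasis_boundedTopology _ _ x

theorem kAdditive_genBaire (hreg : κ.IsRegular) : KAdditive κ (GenBaire κ) :=
  kAdditive_of_nhds_hasBasis (fun x => (GenBaire.nhds_hasAntitoneBasis hreg.ne_zero x).1)
    fun x _ hs _ =>
      let ⟨a, ha⟩ := bddAbove_of_mk_lt hreg hs
      ⟨a, trivial, fun _ hb => (GenBaire.nhds_hasAntitoneBasis hreg.ne_zero x).antitone (ha hb)⟩

theorem GenCantor.exists_isEmbedding_genBaire (hκ : ℵ₀ ≤ κ) :
    ∃ F : GenCantor κ → GenBaire κ, IsEmbedding F := by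
  have hκ0 : κ ≠ 0 := (aleph0_pos.trans_le hκ).ne'
  have := nonempty_ord_toType hκ0
  have := noMaxOrder hκ
  obtain ⟨i₀, i₁, hi⟩ := exists_pair_ne κ.ord.ToType
  let j : Bool → κ.ord.ToType := fun v => cond v i₁ i₀
  have hj : Injective j := Bool.injective_iff.2 hi
  refine ⟨fun w => j ∘ w, isInducing_iff_nhds.2 fun w => ?_,
    fun w w' h => funext fun b => hj (congrFun h b)⟩
  have hpre : ∀ a, (fun w : GenCantor κ => j ∘ w) ⁻¹' {z : GenBaire κ | ∀ b < a, z b = (j ∘ w) b}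
      = {z | ∀ b < a, z b = w b} := fun a => by
    ext w'
    exact forall₂_congr fun b _ => hj.eq_iff
  refine (GenCantor.nhds_hasAntitoneBasis hκ0 w).1.eq_of_same_basis ?_
  exact ((GenBaire.nhds_hasAntitoneBasis hκ0 (j ∘ w)).1.comap _).congr (fun _ => Iff.rfl)
    fun a _ => hpre a

section ClopenBasis

variable {X : Type u} [TopologicalSpace X]

theorem KAdditive.exists_isClopen_subset [RegularSpace X] (hadd : KAdditive κ X) (hκ : ℵ₀ < κ)
    {x : X} {U : Set X} (hU : IsOpen U) (hx : x ∈ U) : ∃ C, IsClopen C ∧ x ∈ C ∧ C ⊆ U := by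
  have step : ∀ V : Set X, IsOpen V → x ∈ V → ∃ W, IsOpen W ∧ x ∈ W ∧ closure W ⊆ V :=
    fun V hV hxV => isTopologicalBasis_opens.exists_closure_subset (hV.mem_nhds hxV)
  choose! W hWo hxW hWV using step
  have hV : ∀ n, IsOpen (W^[n] U) ∧ x ∈ W^[n] U := by
    intro n
    induction n with
    | zero => exact ⟨hU, hx⟩
    | succ n ih =>
      rw [iterate_succ_apply']
      exact ⟨hWo _ ih.1 ih.2, hxW _ ih.1 ih.2⟩
  have hnest : ∀ n, closure (W^[n + 1] U) ⊆ W^[n] U := fun n => by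
    rw [iterate_succ_apply']
    exact hWV _ (hV n).1 (hV n).2
  have hclosed : ⋂ n, W^[n] U = ⋂ n, closure (W^[n + 1] U) :=
    subset_antisymm (fun y hy => mem_iInter.2 fun n => subset_closure (mem_iInter.1 hy (n + 1)))
      (iInter_mono hnest)
  refine ⟨⋂ n, W^[n] U, ⟨?_, ?_⟩, mem_iInter.2 fun n => (hV n).2, iInter_subset _ 0⟩
  · rw [hclosed]
    exact isClosed_iInter fun n => isClosed_closure
  · exact hadd.isOpen_iInter ((countable_range _).le_aleph0.trans_lt hκ) fun n => (hV n).1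

theorem exists_isClopen_basis_of_hasWeightLE (hκ : ℵ₀ ≤ κ) (hw : HasWeightLE κ X)
    (hclopen : ∀ (x : X) (U : Set X), IsOpen U → x ∈ U → ∃ C, IsClopen C ∧ x ∈ C ∧ C ⊆ U) :
    ∃ C : κ.ord.ToType → Set X, (∀ a, IsClopen (C a)) ∧ IsTopologicalBasis (range C) := by
  obtain ⟨B, hB, hBκ⟩ := hw
  have hBB : #(B ×ˢ B) ≤ #κ.ord.ToType := by
    rw [mk_congr (Equiv.Set.prod B B), mk_prod, lift_id, mk_toType, card_ord]
    exact (mul_le_mul' hBκ hBκ).trans (mul_eq_self hκ).le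
  obtain ⟨φ⟩ := hBB
  have hsep : ∀ p : ↥(B ×ˢ B), ∃ D : Set X, IsClopen D ∧
      ((∃ D', IsClopen D' ∧ p.1.1 ⊆ D' ∧ D' ⊆ p.1.2) → p.1.1 ⊆ D ∧ D ⊆ p.1.2) := by
    intro p
    by_cases h : ∃ D', IsClopen D' ∧ p.1.1 ⊆ D' ∧ D' ⊆ p.1.2
    · obtain ⟨D, hD, hsub⟩ := h
      exact ⟨D, hD, fun _ => hsub⟩
    · exact ⟨∅, isClopen_empty, fun h' => absurd h' h⟩
  choose c hc hcsub using hsep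
  have hC : ∀ a, IsClopen (extend φ c (fun _ => ∅) a) := forall_extend_const hc isClopen_empty
  refine ⟨_, hC, isTopologicalBasis_of_isOpen_of_nhds ?_ ?_⟩
  · rintro _ ⟨a, rfl⟩
    exact (hC a).isOpen
  · intro x W hx hW
    obtain ⟨V, hVB, hxV, hVW⟩ := hB.exists_subset_of_mem_open hx hW
    obtain ⟨D, hD, hxD, hDV⟩ := hclopen x V (hB.isOpen hVB) hxV
    obtain ⟨U, hUB, hxU, hUD⟩ := hB.exists_subset_of_mem_open hxD hD.isOpen
    have hUV := hcsub ⟨(U, V), hUB, hVB⟩ ⟨D, hD, hUD, hDV⟩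
    exact ⟨_, ⟨φ ⟨(U, V), hUB, hVB⟩, φ.injective.extend_apply _ _ _⟩, hUV.1 hxU, hUV.2.trans hVW⟩

end ClopenBasis

open Classical in
noncomputable def genCantorCode {X : Type u} (C : κ.ord.ToType → Set X) (x : X) : GenCantor κ :=
  fun a => decide (x ∈ C a)

theorem genCantorCode_eq_true {X : Type u} (C : κ.ord.ToType → Set X) (x : X) (a : κ.ord.ToType) :
    genCantorCode C x a = true ↔ x ∈ C a := by
  simp [genCantorCode]

theorem isEmbedding_genCantorCode {X : Type u} [TopologicalSpace X] [T0Space X]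
    (hadd : KAdditive κ X) (hκ : ℵ₀ ≤ κ) {C : κ.ord.ToType → Set X} (hC : ∀ a, IsClopen (C a))
    (hB : IsTopologicalBasis (range C)) : IsEmbedding (genCantorCode C) := by
  have hκ0 : κ ≠ 0 := (aleph0_pos.trans_le hκ).ne'
  have := noMaxOrder hκ
  have hcont : Continuous (genCantorCode C) := by
    refine continuous_iff_continuousAt.2 fun x =>
      (GenCantor.nhds_hasAntitoneBasis hκ0 _).1.tendsto_right_iff.2 fun a _ => ?_
    have hopen : ∀ b, IsOpen {y | genCantorCode C y b = genCantorCode C x b} := fun b => by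
      by_cases hx : x ∈ C b
      · simp only [genCantorCode, hx, decide_true, decide_eq_true_eq]
        exact (hC b).isOpen
      · simp only [genCantorCode, hx, decide_false, decide_eq_false_iff_not]
        exact (hC b).compl.isOpen
    have hnhds : ⋂ b : Iio a, {y | genCantorCode C y b = genCantorCode C x b} ∈ 𝓝 x :=
      (hadd.isOpen_iInter (mk_range_le.trans_lt (mk_Iio_ord_toType_lt a)) fun b => hopen b).mem_nhds
        (mem_iInter.2 fun b => rfl)
    exact mem_of_superset hnhds fun y hy b hb => mem_iInter.1 hy ⟨b, hb⟩
  refine ⟨isInducing_iff_nhds.2 fun x => le_antisymm (tendsto_iff_comap.1 (hcont.tendsto x)) ?_,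
    fun x y hxy => ?_⟩
  · refine hB.nhds_hasBasis.ge_iff.2 ?_
    rintro _ ⟨⟨a, rfl⟩, hx⟩
    obtain ⟨c, hac⟩ := exists_gt a
    refine mem_comap.2 ⟨_, (GenCantor.nhds_hasAntitoneBasis hκ0 _).1.mem_of_mem (i := c) trivial,
      fun y hy => ?_⟩
    rw [← genCantorCode_eq_true] at hx ⊢
    exact (hy a hac).trans hx
  · refine Inseparable.eq (hB.inseparable_iff.2 ?_)
    rintro _ ⟨a, rfl⟩
    rw [← genCantorCode_eq_true, ← genCantorCode_eq_true, hxy]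

section GMetric

variable {G : Type u} [AddCommGroup G] [LinearOrder G]

theorem HasDegree.exists_lower_bound (hG : HasDegree G κ) {S : Set G} (hpos : ∀ ε ∈ S, 0 < ε)
    (hS : #S < κ) : ∃ η, 0 < η ∧ ∀ ε ∈ S, η ≤ ε := by
  by_contra! h
  exact (hG.2 S hpos fun δ hδ => (h δ hδ).imp fun _ h => ⟨h.1, h.2.le⟩).not_gt hS

theorem HasDegree.exists_pos (hG : HasDegree G κ) (hκ : κ ≠ 0) : ∃ η : G, 0 < η :=
  (hG.exists_lower_bound (S := ∅) (by simp) (by simpa using hκ.bot_lt)).imp fun _ h => h.1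

theorem HasDegree.exists_pos_lt (hG : HasDegree G κ) (hκ : 1 < κ) {δ : G} (hδ : 0 < δ) :
    ∃ η, 0 < η ∧ η < δ := by
  by_contra! h
  exact (hG.2 {δ} (by simpa using hδ) fun η hη => ⟨δ, rfl, h η hη⟩).not_gt (by simpa using hκ)

theorem HasDegree.exists_coinitial_seq (hG : HasDegree G κ) (hκ : κ ≠ 0) :
    ∃ g : κ.ord.ToType → G, (∀ a, 0 < g a) ∧ ∀ δ, 0 < δ → ∃ a, g a ≤ δ := by
  obtain ⟨η, hη⟩ := hG.exists_pos hκ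
  obtain ⟨⟨S, hpos, hcoinit, hSκ⟩, -⟩ := hG
  rw [← card_ord κ, ← mk_toType] at hSκ
  obtain ⟨φ⟩ := hSκ
  refine ⟨extend φ Subtype.val fun _ => η, forall_extend_const (fun s => hpos s s.2) hη,
    fun δ hδ => ?_⟩
  obtain ⟨s, hs, hsδ⟩ := hcoinit δ hδ
  exact ⟨φ ⟨s, hs⟩, (φ.injective.extend_apply _ _ _).trans_le hsδ⟩

theorem HasDegree.exists_antitone_coinitial (hG : HasDegree G κ) (hκ : ℵ₀ ≤ κ) :
    ∃ ε : κ.ord.ToType → G, (∀ a, 0 < ε a) ∧ Antitone ε ∧ ∀ δ, 0 < δ → ∃ a, ε a < δ := by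
  obtain ⟨g, hgpos, hgcoinit⟩ := hG.exists_coinitial_seq (aleph0_pos.trans_le hκ).ne'
  have step : ∀ a (ε : ∀ b < a, {η : G // 0 < η}),
      ∃ η : G, 0 < η ∧ η ≤ g a ∧ ∀ b hb, η ≤ ε b hb := by
    intro a ε
    obtain ⟨η, hη, hle⟩ := hG.exists_lower_bound (S := range fun b : Iio a => (ε b b.2).1)
      (forall_mem_range.2 fun b => (ε b b.2).2) (mk_range_le.trans_lt (mk_Iio_ord_toType_lt a))
    exact ⟨min η (g a), lt_min hη (hgpos a), min_le_right _ _,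
      fun b hb => (min_le_left _ _).trans (hle _ ⟨⟨b, hb⟩, rfl⟩)⟩
  choose η hηpos hηg hηε using step
  let ε : κ.ord.ToType → {η : G // 0 < η} :=
    wellFounded_lt.fix fun a ε => ⟨η a ε, hηpos a ε⟩
  have hε : ∀ a, (ε a).1 = η a fun b _ => ε b := fun a => by
    simp only [ε]
    rw [wellFounded_lt.fix_eq]
  refine ⟨fun a => (ε a).1, fun a => (ε a).2, fun a b hab => ?_, fun δ hδ => ?_⟩
  · rcases hab.lt_or_eq with hab | rfl
    · exact (hε b).trans_le (hηε b _ a hab)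
    · exact le_rfl
  · obtain ⟨δ', hδ', hδ'δ⟩ := hG.exists_pos_lt ((one_lt_aleph0).trans_le hκ) hδ
    obtain ⟨a, ha⟩ := hgcoinit δ' hδ'
    exact ⟨a, ((hε a).trans_le ((hηg a _).trans ha)).trans_lt hδ'δ⟩

variable {X : Type u} {d : X → X → G}

theorem IsGMetric.gBall_sub_subset [IsOrderedAddMonoid G] (hd : IsGMetric d) (x y : X) (ε : G) :
    GBall d y (ε - d x y) ⊆ GBall d x ε := fun z hz =>
  calc d x z ≤ d x y + d y z := hd.triangle x y z
    _ < d x y + (ε - d x y) := add_lt_add_right hz _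
    _ = ε := add_sub_cancel _ _

theorem IsGMetric.mem_gBall_self (hd : IsGMetric d) (x : X) {ε : G} (hε : 0 < ε) :
    x ∈ GBall d x ε :=
  ((hd.eq_zero_iff x x).2 rfl).trans_lt hε

theorem IsGMetric.isOpen_gMetricTopology_iff [IsOrderedAddMonoid G] (hd : IsGMetric d)
    (hG : ∃ ε : G, 0 < ε) {U : Set X} :
    IsOpen[GMetricTopology d] U ↔ ∀ x ∈ U, ∃ ε, 0 < ε ∧ GBall d x ε ⊆ U := by
  refine ⟨fun hU => ?_, fun h => ?_⟩
  · induction hU with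
    | basic V hV =>
      obtain ⟨y, ε, -, rfl⟩ := hV
      exact fun x hx => ⟨ε - d y x, sub_pos.2 hx, hd.gBall_sub_subset y x ε⟩
    | univ =>
      obtain ⟨ε, hε⟩ := hG
      exact fun _ _ => ⟨ε, hε, subset_univ _⟩
    | inter U V _ _ ihU ihV =>
      rintro x ⟨hxU, hxV⟩
      obtain ⟨ε₁, hε₁, hU⟩ := ihU x hxU
      obtain ⟨ε₂, hε₂, hV⟩ := ihV x hxV
      exact ⟨min ε₁ ε₂, lt_min hε₁ hε₂, fun z hz =>
        ⟨hU (hz.trans_le (min_le_left _ _)), hV (hz.trans_le (min_le_right _ _))⟩⟩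
    | sUnion S _ ih =>
      rintro x ⟨U, hUS, hxU⟩
      obtain ⟨ε, hε, hU⟩ := ih U hUS x hxU
      exact ⟨ε, hε, hU.trans (subset_sUnion_of_mem hUS)⟩
  · choose! ε hε hεU using h
    have hU : U = ⋃₀ ((fun x => GBall d x (ε x)) '' U) := by
      refine subset_antisymm (fun x hx => ⟨_, mem_image_of_mem _ hx, ?_⟩)
        (sUnion_subset (forall_mem_image.2 hεU))
      exact hd.mem_gBall_self x (hε x hx)
    rw [hU]
    exact .sUnion _ (forall_mem_image.2 fun x hx => .basic _ ⟨x, ε x, hε x hx, rfl⟩)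

theorem IsGMetric.gCompatible_iff [IsOrderedAddMonoid G] [TopologicalSpace X] (hd : IsGMetric d)
    (hG : ∃ ε : G, 0 < ε) :
    GCompatible d ↔ ∀ x, (𝓝 x).HasBasis (fun ε : G => 0 < ε) (GBall d x) := by
  refine ⟨fun h x => ⟨fun U => ?_⟩, fun h => TopologicalSpace.ext_iff.2 fun U => ?_⟩
  · subst h
    let := GMetricTopology d
    rw [mem_nhds_iff]
    constructor
    · rintro ⟨V, hVU, hV, hxV⟩
      obtain ⟨ε, hε, hball⟩ := (hd.isOpen_gMetricTopology_iff hG).1 hV x hxV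
      exact ⟨ε, hε, hball.trans hVU⟩
    · rintro ⟨ε, hε, hball⟩
      refine ⟨_, hball, (hd.isOpen_gMetricTopology_iff hG).2 fun y hy => ?_, hd.mem_gBall_self x hε⟩
      exact ⟨ε - d x y, sub_pos.2 hy, hd.gBall_sub_subset x y ε⟩
  · rw [hd.isOpen_gMetricTopology_iff hG, isOpen_iff_mem_nhds]
    exact forall₂_congr fun x _ => ((h x).mem_iff).symm

theorem GMetrizable.of_isEmbedding [IsOrderedAddMonoid G] {Y : Type u} [TopologicalSpace X]
    [TopologicalSpace Y] (hG : ∃ ε : G, 0 < ε) {e : X → Y} (he : IsEmbedding e)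
    (h : GMetrizable G Y) : GMetrizable G X := by
  obtain ⟨d, hd, hc⟩ := h
  have hd' : IsGMetric fun x y => d (e x) (e y) :=
    ⟨fun _ _ => hd.nonneg _ _, fun _ _ => (hd.eq_zero_iff _ _).trans he.injective.eq_iff,
      fun _ _ => hd.symm _ _, fun _ _ _ => hd.triangle _ _ _⟩
  refine ⟨_, hd', (hd'.gCompatible_iff hG).2 fun x => ?_⟩
  rw [he.isInducing.nhds_eq_comap]
  exact ((hd.gCompatible_iff hG).1 hc (e x)).comap e

theorem KAdditive.of_gMetrizable [IsOrderedAddMonoid G] [TopologicalSpace X]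
    (hG : HasDegree G κ) (hκ : κ ≠ 0) (h : GMetrizable G X) : KAdditive κ X := by
  obtain ⟨d, hd, hc⟩ := h
  refine kAdditive_of_nhds_hasBasis ((hd.gCompatible_iff (hG.exists_pos hκ)).1 hc)
    fun x s hs hpos => ?_
  obtain ⟨η, hη, hle⟩ := hG.exists_lower_bound hpos hs
  exact ⟨η, hη, fun ε hε y hy => hy.trans_le (hle ε hε)⟩

end GMetric

section GenBaireMetric

variable {x y z : GenBaire κ}

noncomputable def firstDiff (h : x ≠ y) : κ.ord.ToType :=
  wellFounded_lt.min {a | x a ≠ y a} (Function.ne_iff.1 h)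

theorem le_firstDiff_iff (h : x ≠ y) {c : κ.ord.ToType} :
    c ≤ firstDiff h ↔ ∀ b < c, x b = y b :=
  ⟨fun hc _ hb => not_not.1 fun hne => wellFounded_lt.not_lt_min _ hne (hb.trans_le hc),
    fun hc => not_lt.1 fun hlt => absurd (hc _ hlt) (wellFounded_lt.min_mem {a | x a ≠ y a} _)⟩

theorem firstDiff_comm (h : x ≠ y) : firstDiff h.symm = firstDiff h :=
  le_antisymm ((le_firstDiff_iff h).2 fun b hb => ((le_firstDiff_iff h.symm).1 le_rfl b hb).symm)
    ((le_firstDiff_iff h.symm).2 fun b hb => ((le_firstDiff_iff h).1 le_rfl b hb).symm)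

variable {G : Type u} {ε : κ.ord.ToType → G}

open Classical in
noncomputable def genBaireDist [Zero G] (ε : κ.ord.ToType → G) (x y : GenBaire κ) : G :=
  if h : x = y then 0 else ε (firstDiff h)

theorem genBaireDist_of_ne [Zero G] (h : x ≠ y) : genBaireDist ε x y = ε (firstDiff h) :=
  dif_neg h

theorem genBaireDist_self [Zero G] : genBaireDist ε x x = 0 :=
  dif_pos rfl

theorem genBaireDist_nonneg [Zero G] [LinearOrder G] (h0 : ∀ a, 0 ≤ ε a) :
    0 ≤ genBaireDist ε x y := by
  by_cases h : x = y
  · rw [h, genBaireDist_self]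
  · rw [genBaireDist_of_ne h]
    exact h0 _

theorem genBaireDist_le_max [Zero G] [LinearOrder G] (h0 : ∀ a, 0 ≤ ε a) (hanti : Antitone ε) :
    genBaireDist ε x z ≤ max (genBaireDist ε x y) (genBaireDist ε y z) := by
  by_cases hxz : x = z
  · rw [hxz, genBaireDist_self]
    exact le_max_of_le_left (genBaireDist_nonneg h0)
  by_cases hxy : x = y
  · rw [hxy]
    exact le_max_right _ _
  by_cases hyz : y = z
  · rw [hyz]
    exact le_max_left _ _
  rw [genBaireDist_of_ne hxz, genBaireDist_of_ne hxy, genBaireDist_of_ne hyz, ← hanti.map_min]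
  refine hanti ((le_firstDiff_iff hxz).2 fun b hb => ?_)
  rw [lt_min_iff] at hb
  exact ((le_firstDiff_iff hxy).1 le_rfl b hb.1).trans ((le_firstDiff_iff hyz).1 le_rfl b hb.2)

theorem isGMetric_genBaireDist [AddCommGroup G] [LinearOrder G] [IsOrderedAddMonoid G]
    (hpos : ∀ a, 0 < ε a) (hanti : Antitone ε) : IsGMetric (genBaireDist ε) := by
  have h0 : ∀ a, 0 ≤ ε a := fun a => (hpos a).le
  refine ⟨fun _ _ => genBaireDist_nonneg h0, fun x y => ⟨fun h => ?_, ?_⟩, fun x y => ?_,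
    fun x y z => (genBaireDist_le_max h0 hanti).trans
      (max_le (le_add_of_nonneg_right (genBaireDist_nonneg h0))
        (le_add_of_nonneg_left (genBaireDist_nonneg h0)))⟩
  · by_contra hxy
    exact (hpos _).ne' ((genBaireDist_of_ne hxy).symm.trans h)
  · rintro rfl
    exact genBaireDist_self
  · by_cases h : x = y
    · rw [h]
    · rw [genBaireDist_of_ne h, genBaireDist_of_ne (Ne.symm h), firstDiff_comm]

theorem eq_of_genBaireDist_lt [Zero G] [LinearOrder G] (hanti : Antitone ε) {a : κ.ord.ToType}
    (h : genBaireDist ε x y < ε a) : ∀ b < a, x b = y b := by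
  by_cases hxy : x = y
  · exact fun b _ => congrFun hxy b
  rw [genBaireDist_of_ne hxy] at h
  exact (le_firstDiff_iff hxy).1 (hanti.reflect_lt h).le

theorem genBaireDist_le_of_eq [Zero G] [LinearOrder G] (h0 : ∀ a, 0 ≤ ε a) (hanti : Antitone ε)
    {a c : κ.ord.ToType} (hxy : ∀ b < c, x b = y b) (hac : a < c) : genBaireDist ε x y ≤ ε a := by
  by_cases h : x = y
  · rw [h, genBaireDist_self]
    exact h0 a
  rw [genBaireDist_of_ne h]
  exact hanti (hac.trans_le ((le_firstDiff_iff h).2 hxy)).le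

theorem gCompatible_genBaireDist [AddCommGroup G] [LinearOrder G] [IsOrderedAddMonoid G]
    (hκ : ℵ₀ ≤ κ) (hpos : ∀ a, 0 < ε a) (hanti : Antitone ε) (hcoinit : ∀ δ, 0 < δ → ∃ a, ε a < δ) :
    GCompatible (genBaireDist ε) := by
  have hκ0 : κ ≠ 0 := (aleph0_pos.trans_le hκ).ne'
  have := nonempty_ord_toType hκ0
  have := noMaxOrder hκ
  refine ((isGMetric_genBaireDist hpos hanti).gCompatible_iff ⟨_, hpos (Classical.arbitrary _)⟩).2
    fun x => (GenBaire.nhds_hasAntitoneBasis hκ0 x).1.to_hasBasis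
      (fun a _ => ⟨ε a, hpos a, fun y hy b hb => (eq_of_genBaireDist_lt hanti hy b hb).symm⟩)
      fun δ hδ => ?_
  obtain ⟨a, ha⟩ := hcoinit δ hδ
  obtain ⟨c, hac⟩ := exists_gt a
  exact ⟨c, trivial, fun y hy => (genBaireDist_le_of_eq (fun a => (hpos a).le) hanti
    (fun b hb => (hy b hb).symm) hac).trans_lt ha⟩

theorem gMetrizable_genBaire [AddCommGroup G] [LinearOrder G] [IsOrderedAddMonoid G] (hκ : ℵ₀ ≤ κ)
    (hG : HasDegree G κ) : GMetrizable G (GenBaire κ) :=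
  let ⟨_, hpos, hanti, hcoinit⟩ := hG.exists_antitone_coinitial hκ
  ⟨_, isGMetric_genBaireDist hpos hanti, gCompatible_genBaireDist hκ hpos hanti hcoinit⟩

end GenBaireMetric

end

theorem stmt_3_general (κ : Cardinal.{u}) (hreg : κ.IsRegular) (hunc : ℵ₀ < κ)
    (G : Type u) [AddCommGroup G] [LinearOrder G] [IsOrderedAddMonoid G] (hG : HasDegree G κ)
    (X : Type u) [TopologicalSpace X] [T2Space X] [RegularSpace X]
    (hw : HasWeightLE κ X) :
    (KAdditive κ X ↔ GMetrizable G X) ∧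
    (KAdditive κ X ↔ ∃ S : Set (GenCantor κ), Nonempty (X ≃ₜ ↥S)) ∧
    (KAdditive κ X ↔ ∃ S : Set (GenBaire κ), Nonempty (X ≃ₜ ↥S)) := by
  simp only [exists_homeomorph_subtype_iff]
  have toCantor : KAdditive κ X → ∃ e : X → GenCantor κ, IsEmbedding e := fun hadd =>
    let ⟨_, hC, hB⟩ := exists_isClopen_basis_of_hasWeightLE hunc.le hw
      fun _ _ => hadd.exists_isClopen_subset hunc
    ⟨_, isEmbedding_genCantorCode hadd hunc.le hC hB⟩
  have toBaire : (∃ e : X → GenCantor κ, IsEmbedding e) → ∃ e : X → GenBaire κ, IsEmbedding e :=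
    fun ⟨_, he⟩ =>
      let ⟨_, hF⟩ := GenCantor.exists_isEmbedding_genBaire hunc.le
      ⟨_, hF.comp he⟩
  have ofBaire : (∃ e : X → GenBaire κ, IsEmbedding e) → KAdditive κ X :=
    fun ⟨_, he⟩ => (kAdditive_genBaire hreg).of_isInducing he.isInducing
  have metricOfBaire : (∃ e : X → GenBaire κ, IsEmbedding e) → GMetrizable G X :=
    fun ⟨_, he⟩ => (gMetrizable_genBaire hunc.le hG).of_isEmbedding (hG.exists_pos hreg.ne_zero) he
  exact ⟨⟨fun h => metricOfBaire (toBaire (toCantor h)), KAdditive.of_gMetrizable hG hreg.ne_zero⟩,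
    ⟨toCantor, fun h => ofBaire (toBaire h)⟩, ⟨fun h => toBaire (toCantor h), ofBaire⟩⟩

/-- Sikorski: for a regular Hausdorff space of weight ≤ κ,
κ-additivity ↔ 𝔾-metrizability ↔ embeddability into 2^κ ↔ embeddability into κ^κ. -/
theorem stmt_3 (κ : Cardinal.{u}) (hreg : κ.IsRegular) (hunc : ℵ₀ < κ)
    (hpow : (2 : Cardinal.{u}) ^< κ = κ)
    (G : Type u) [AddCommGroup G] [LinearOrder G] [IsOrderedAddMonoid G] (hG : HasDegree G κ)
    (X : Type u) [TopologicalSpace X] [T2Space X] [RegularSpace X]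
    (hw : HasWeightLE κ X) :
    (KAdditive κ X ↔ GMetrizable G X) ∧
    (KAdditive κ X ↔ ∃ S : Set (GenCantor κ), Nonempty (X ≃ₜ ↥S)) ∧
    (KAdditive κ X ↔ ∃ S : Set (GenBaire κ), Nonempty (X ≃ₜ ↥S)) :=
  stmt_3_general κ hreg hunc G hG X hw

end GDST
end

section
/- Every κ-additive fSC_κ-space is homeomorphic to a closed subset of the generalized Baire space κ^κ; if moreover the space is an SC_κ-space, then it is homeomorphic to a superclosed subset of κ^κ. -/
universe u v

open Cardinal Set

namespace GDST

/-!
Fix a clopen basis `(W a)_{a < κ}`: in a regular `κ`-additive space the intersection of a countable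
chain of shrinking basic sets is clopen, and `κ ^ ℵ₀ = κ` bounds the number of such chains. Every
point `x` plays the game against II's strategy: at round `β` player I plays the intersection
`C_β(x)` of the earlier pieces, and the next piece is the member containing `x` of a partition of
`C_β(x)` into at most `κ` traces of clopen atoms, each contained in II's answer to one of its own
points and each deciding `W β`. Coding the pieces by ordinals `< κ` sends `x` to a branch of `κ^κ`; as the
clopen cells `C_β(x)` form a neighbourhood basis at `x`, this is a topological embedding. A branch
all of whose initial segments are codes of points is followed by a legal run of the game, so if II
wins the fair game some point lies in all its sets, and its code is the branch: the image is the
body of a tree, hence closed. If II wins the strong game, the intersections at limit rounds are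
nonempty as well, which makes that tree `<κ`-closed.
-/

open Order Topology TopologicalSpace

section Cardinals

variable {κ : Cardinal.{u}}

theorem mk_Iio_toType_lt (b : κ.ord.ToType) : #(Iio b) < κ := by
  simpa using mk_Iio_lt b

theorem exists_gt_of_mk_lt (hκ : κ.IsRegular) {s : Set κ.ord.ToType} (hs : #s < κ) :
    ∃ b, ∀ a ∈ s, a < b := by
  by_contra! h
  have hcof : κ ≤ #s := by simpa [Ordinal.cof_toType, hκ.cof_ord] using Order.cof_le h
  exact hcof.not_gt hs

theorem mk_sigma_toType_le {F : κ.ord.ToType → Type u} (hκ : ℵ₀ ≤ κ) (hF : ∀ b, #(F b) ≤ κ) :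
    #(Σ b, F b) ≤ κ := by
  rw [mk_sigma]
  calc sum (fun b => #(F b)) ≤ sum (fun _ : κ.ord.ToType => κ) := sum_le_sum _ _ hF
    _ = κ := by simp [mul_eq_self hκ]

theorem two_power_le_of_lt (hpow : 2 ^< κ = κ) {μ : Cardinal.{u}} (hμ : μ < κ) : 2 ^ μ ≤ κ :=
  hpow ▸ le_powerlt 2 hμ

/-- A `μ`-sequence in `κ` is bounded by regularity, and below a bound `b` there are only
`#(Iio b) ^ μ ≤ 2 ^ (#(Iio b) * μ) ≤ κ` of them. -/
theorem power_le_self_of_lt (hκ : κ.IsRegular) (hpow : 2 ^< κ = κ) {μ : Cardinal.{u}}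
    (hμ : μ < κ) : κ ^ μ ≤ κ := by
  induction μ using Cardinal.inductionOn with | _ ι =>
  have hbound : ∀ f : ι → κ.ord.ToType, ∃ b, ∀ i, f i < b := fun f =>
    (exists_gt_of_mk_lt hκ (mk_range_le.trans_lt hμ)).imp fun b hb i => hb _ ⟨i, rfl⟩
  choose bnd hbnd using hbound
  let enc : (ι → κ.ord.ToType) → Σ b : κ.ord.ToType, ι → Iio b :=
    fun f => ⟨bnd f, fun i => ⟨f i, hbnd f i⟩⟩
  have henc : Function.Injective enc := fun f g hfg =>
    funext fun i => congrArg (fun p : Σ b : κ.ord.ToType, ι → Iio b => (p.2 i : κ.ord.ToType)) hfg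
  calc κ ^ #ι = #(ι → κ.ord.ToType) := by rw [← power_def, mk_ord_toType]
    _ ≤ #(Σ b : κ.ord.ToType, ι → Iio b) := mk_le_of_injective henc
    _ ≤ κ := mk_sigma_toType_le hκ.aleph0_le fun b => by
      calc #(ι → Iio b) = #(Iio b) ^ #ι := (power_def _ _).symm
        _ ≤ (2 ^ #(Iio b)) ^ #ι := power_le_power_right (cantor _).le
        _ = 2 ^ (#(Iio b) * #ι) := power_mul.symm
        _ ≤ κ := two_power_le_of_lt hpow (mul_lt_of_lt hκ.aleph0_le (mk_Iio_toType_lt b) hμ)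

end Cardinals

section KAdditive

variable {κ : Cardinal.{u}} {X : Type u} [TopologicalSpace X]

theorem KAdditive.isOpen_iInter_s4 (hadd : KAdditive κ X) {ι : Type u} (hι : #ι < κ)
    {U : ι → Set X} (hU : ∀ i, IsOpen (U i)) : IsOpen (⋂ i, U i) := by
  rw [← sInter_range]
  exact hadd _ (mk_range_le.trans_lt hι) (forall_mem_range.2 hU)

theorem KAdditive.isOpen_iInter_nat (hadd : KAdditive κ X) (hκ : ℵ₀ < κ) {U : ℕ → Set X}
    (hU : ∀ n, IsOpen (U n)) : IsOpen (⋂ n, U n) := by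
  rw [← Equiv.ulift.surjective.iInter_comp]
  exact hadd.isOpen_iInter_s4 (by simpa using hκ) fun n => hU _

theorem KAdditive.isClopen_interBelow (hadd : KAdditive κ X) {V : κ.ord.ToType → Set X}
    {β : κ.ord.ToType} (hV : ∀ γ < β, IsClopen (V γ)) : IsClopen (InterBelow V β) := by
  have h : InterBelow V β = ⋂ γ : Iio β, V γ := by simp [InterBelow, iInter_subtype]
  rw [h]
  exact ⟨isClosed_iInter fun γ => (hV γ γ.2).isClosed,
    hadd.isOpen_iInter_s4 (mk_Iio_toType_lt β) fun γ => (hV γ γ.2).isOpen⟩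

/-- In a regular space whose countable intersections of open sets are open, the intersection of
a chain `V₀ ⊇ closure V₁ ⊇ V₁ ⊇ closure V₂ ⊇ ⋯` of basic sets is clopen. -/
theorem exists_isClopen_iInter_basis_subset [RegularSpace X] (hadd : KAdditive κ X)
    (hκ : ℵ₀ < κ) {B : Set (Set X)} (hB : IsTopologicalBasis B) {x : X} {U : Set X}
    (hU : IsOpen U) (hx : x ∈ U) :
    ∃ c : ℕ → B, IsClopen (⋂ n, (c n : Set X)) ∧ x ∈ ⋂ n, (c n : Set X) ∧
      ⋂ n, (c n : Set X) ⊆ U := by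
  have step : ∀ V ∈ B, x ∈ V → ∃ V' ∈ B, x ∈ V' ∧ closure V' ⊆ V := by
    intro V hV hxV
    obtain ⟨t, ht, htc, htV⟩ := exists_mem_nhds_isClosed_subset ((hB.isOpen hV).mem_nhds hxV)
    obtain ⟨V', hV', hxV', hV't⟩ := hB.mem_nhds_iff.1 ht
    exact ⟨V', hV', hxV', (closure_minimal hV't htc).trans htV⟩
  choose! g hgB hxg hgcl using step
  obtain ⟨V₀, hV₀, hxV₀, hV₀U⟩ := hB.exists_subset_of_mem_open hx hU
  have hc : ∀ n, g^[n] V₀ ∈ B ∧ x ∈ g^[n] V₀ := by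
    intro n
    induction n with
    | zero => exact ⟨hV₀, hxV₀⟩
    | succ n ih =>
      rw [Function.iterate_succ_apply']
      exact ⟨hgB _ ih.1 ih.2, hxg _ ih.1 ih.2⟩
  refine ⟨fun n => ⟨g^[n] V₀, (hc n).1⟩, ⟨isClosed_of_closure_subset ?_,
    hadd.isOpen_iInter_nat hκ fun n => hB.isOpen (hc n).1⟩, mem_iInter.2 fun n => (hc n).2,
    (iInter_subset _ 0).trans hV₀U⟩
  refine subset_iInter fun n => ((closure_mono (iInter_subset _ (n + 1))).trans ?_)
  show closure (g^[n + 1] V₀) ⊆ g^[n] V₀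
  rw [Function.iterate_succ_apply']
  exact hgcl _ (hc n).1 (hc n).2

theorem exists_isClopen_basis [RegularSpace X] (hκ : κ.IsRegular) (hunc : ℵ₀ < κ)
    (hpow : 2 ^< κ = κ) (hadd : KAdditive κ X) (hw : HasWeightLE κ X) :
    ∃ W : κ.ord.ToType → Set X, (∀ a, IsClopen (W a)) ∧
      ∀ x U, IsOpen U → x ∈ U → ∃ a, x ∈ W a ∧ W a ⊆ U := by
  obtain ⟨B, hB, hBκ⟩ := hw
  -- `∅` is added so that the family `K` below is nonempty and can be enumerated by `κ`
  have hB' := hB.insert_empty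
  have hB'κ : #(insert ∅ B : Set (Set X)) ≤ κ :=
    calc #(insert ∅ B : Set (Set X)) ≤ #B + 1 := mk_insert_le
      _ ≤ κ + 1 := by gcongr
      _ = κ := add_one_eq hκ.aleph0_le
  let K : Set (Set X) := {S | IsClopen S ∧ ∃ c : ℕ → (insert ∅ B : Set (Set X)), S = ⋂ n, c n}
  have hKκ : #K ≤ κ := by
    have hK : K ⊆ range fun c : ℕ → (insert ∅ B : Set (Set X)) => ⋂ n, (c n : Set X) :=
      fun S hS => hS.2.imp fun c hc => hc.symm
    calc #K ≤ #(ℕ → (insert ∅ B : Set (Set X))) := (mk_le_mk_of_subset hK).trans mk_range_le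
      _ = #(insert ∅ B : Set (Set X)) ^ ℵ₀ := by simp
      _ ≤ κ ^ ℵ₀ := power_le_power_right hB'κ
      _ ≤ κ := power_le_self_of_lt hκ hpow hunc
  have : Nonempty K := ⟨⟨∅, isClopen_empty, fun _ => ⟨∅, mem_insert _ _⟩, iInter_const _ |>.symm⟩⟩
  obtain ⟨e⟩ := (le_def _ _).1 (hKκ.trans_eq (mk_ord_toType κ).symm)
  let g : κ.ord.ToType → K := Function.invFun e
  refine ⟨fun a => g a, fun a => (g a).2.1, fun x U hU hx => ?_⟩
  obtain ⟨c, hcl, hxc, hcU⟩ := exists_isClopen_iInter_basis_subset hadd hunc hB' hU hx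
  obtain ⟨a, ha⟩ : ∃ a, g a = ⟨_, hcl, c, rfl⟩ := Function.invFun_surjective e.injective _
  exact ⟨a, by simpa [ha] using hxc, by simpa [ha] using hcU⟩

end KAdditive

section Atoms

variable {ι X : Type*} [LinearOrder ι]

def atom (W : ι → Set X) (c : ι) (x : X) : Set X := {u | ∀ a < c, u ∈ W a ↔ x ∈ W a}

def atoms (W : ι → Set X) : Set (Set X) := range fun p : ι × X => atom W p.1 p.2

variable {W : ι → Set X}

theorem mem_atom_self (c : ι) (x : X) : x ∈ atom W c x := fun _ _ => Iff.rfl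

theorem atom_mem_atoms (c : ι) (x : X) : atom W c x ∈ atoms W := ⟨(c, x), rfl⟩

theorem atom_anti {c c' : ι} (h : c ≤ c') (x : X) : atom W c' x ⊆ atom W c x :=
  fun _ hu a ha => hu a (ha.trans_le h)

theorem atom_eq_of_mem {c : ι} {x u : X} (hu : u ∈ atom W c x) : atom W c u = atom W c x :=
  ext fun _ => forall₂_congr fun a ha => by rw [hu a ha]

theorem atom_subset {a c : ι} (ha : a < c) {x : X} (hx : x ∈ W a) : atom W c x ⊆ W a :=
  fun _ hu => (hu a ha).2 hx

end Atoms

section AtomsOfKappa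

variable {κ : Cardinal.{u}} {X : Type u} {W : κ.ord.ToType → Set X}

theorem KAdditive.isClopen_atom [TopologicalSpace X] (hadd : KAdditive κ X)
    (hW : ∀ a, IsClopen (W a)) (c : κ.ord.ToType) (x : X) : IsClopen (atom W c x) := by
  classical
  have h : atom W c x = InterBelow (fun a => if x ∈ W a then W a else (W a)ᶜ) c := by
    ext u
    refine (forall₂_congr fun a _ => ?_).trans mem_iInter₂.symm
    by_cases hx : x ∈ W a <;> simp [hx]
  rw [h]
  refine hadd.isClopen_interBelow fun a _ => ?_
  split_ifs
  exacts [hW a, (hW a).compl]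

/-- An atom is determined by its level `c` and the pattern of `x` below `c`; by `2 ^< κ = κ`
there are at most `κ` such codes. -/
theorem mk_atoms_le (hκ : κ.IsRegular) (hpow : 2 ^< κ = κ) : #(atoms W) ≤ κ := by
  classical
  let ofCode : (Σ c : κ.ord.ToType, Iio c → Bool) → Set X :=
    fun p => {u | ∀ a : Iio p.1, u ∈ W a ↔ p.2 a}
  have hsub : atoms W ⊆ range ofCode := by
    rintro _ ⟨⟨c, x⟩, rfl⟩
    exact ⟨⟨c, fun a => decide (x ∈ W a)⟩, ext fun u => by simp [ofCode, atom]⟩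
  refine (mk_le_mk_of_subset hsub).trans (mk_range_le.trans ?_)
  refine mk_sigma_toType_le hκ.aleph0_le fun c => ?_
  simpa using two_power_le_of_lt hpow (mk_Iio_toType_lt c)

end AtomsOfKappa

section Piece

variable {ι X : Type*} [LinearOrder ι] [WellFoundedLT ι]
  (W : ι → Set X) (C : Set X) (b : ι) (V : X → Set X)

def HasAtomsAbove : Prop := ∀ x ∈ C, ∃ c, b < c ∧ atom W c x ∩ C ⊆ V x

def IsGoodLevel (c : ι) (x : X) : Prop := b < c ∧ ∃ w ∈ atom W c x ∩ C, atom W c x ∩ C ⊆ V w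

open Classical in
noncomputable def pieceLevel (x : X) : ι :=
  if h : ∃ c, IsGoodLevel W C b V c x then wellFounded_lt.min {c | IsGoodLevel W C b V c x} h
  else b

/-- Given `HasAtomsAbove`, the pieces partition `C`, each one lying in the answer `V w` to one of
its own points: atoms of different levels are nested or disjoint, and the pieces are the maximal
good ones. -/
def piece (x : X) : Set X := atom W (pieceLevel W C b V x) x ∩ C

open Classical in
noncomputable def pieceWitness (x : X) : X :=
  if h : ∃ w ∈ piece W C b V x, piece W C b V x ⊆ V w then h.choose else x

variable {W C b V} {x u : X}

theorem mem_piece (hx : x ∈ C) : x ∈ piece W C b V x := ⟨mem_atom_self _ _, hx⟩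

theorem piece_subset : piece W C b V x ⊆ C := inter_subset_right

theorem pieceWitness_mem (hx : x ∈ C) : pieceWitness W C b V x ∈ piece W C b V x := by
  unfold pieceWitness
  split_ifs with h
  exacts [h.choose_spec.1, mem_piece hx]

theorem pieceLevel_le {c : ι} (hc : IsGoodLevel W C b V c x) :
    pieceLevel W C b V x ≤ c := by
  have h : ∃ c, IsGoodLevel W C b V c x := ⟨c, hc⟩
  rw [pieceLevel, dif_pos h]
  exact wellFounded_lt.min_le (s := {c | IsGoodLevel W C b V c x}) hc

variable (hV : HasAtomsAbove W C b V)
include hV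

theorem isGoodLevel_pieceLevel (hx : x ∈ C) : IsGoodLevel W C b V (pieceLevel W C b V x) x := by
  have h : ∃ c, IsGoodLevel W C b V c x := by
    obtain ⟨c, hbc, hc⟩ := hV x hx
    exact ⟨c, hbc, x, ⟨mem_atom_self c x, hx⟩, hc⟩
  rw [pieceLevel, dif_pos h]
  exact wellFounded_lt.min_mem _ h

theorem lt_pieceLevel (hx : x ∈ C) : b < pieceLevel W C b V x :=
  (isGoodLevel_pieceLevel hV hx).1

theorem piece_subset_pieceWitness (hx : x ∈ C) :
    piece W C b V x ⊆ V (pieceWitness W C b V x) := by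
  have h : ∃ w ∈ piece W C b V x, piece W C b V x ⊆ V w := (isGoodLevel_pieceLevel hV hx).2
  rw [pieceWitness, dif_pos h]
  exact h.choose_spec.2

theorem atom_pieceLevel_eq_of_mem (hx : x ∈ C) (hu : u ∈ piece W C b V x) :
    atom W (pieceLevel W C b V u) u = atom W (pieceLevel W C b V x) x := by
  have hgood : ∀ c ≤ pieceLevel W C b V x, IsGoodLevel W C b V c u ↔ IsGoodLevel W C b V c x :=
    fun c hc => by rw [IsGoodLevel, IsGoodLevel, atom_eq_of_mem (atom_anti hc x hu.1)]
  have hle : pieceLevel W C b V u ≤ pieceLevel W C b V x :=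
    pieceLevel_le ((hgood _ le_rfl).2 (isGoodLevel_pieceLevel hV hx))
  rw [le_antisymm hle (pieceLevel_le ((hgood _ hle).1 (isGoodLevel_pieceLevel hV hu.2))),
    atom_eq_of_mem hu.1]

theorem pieceWitness_eq_of_piece_eq (hx : x ∈ C) (h : piece W C b V u = piece W C b V x) :
    pieceWitness W C b V u = pieceWitness W C b V x := by
  have hex : ∃ w ∈ piece W C b V x, piece W C b V x ⊆ V w := (isGoodLevel_pieceLevel hV hx).2
  have hexu : ∃ w ∈ piece W C b V u, piece W C b V u ⊆ V w := h ▸ hex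
  rw [pieceWitness, pieceWitness, dif_pos hex, dif_pos hexu]
  congr 1
  simp only [h]

end Piece

theorem IsLimitElt.succ_lt {ι : Type*} [LinearOrder ι] [SuccOrder ι] {a b : ι}
    (ha : IsLimitElt a) (hb : b < a) : succ b < a := by
  obtain ⟨c, hbc, hca⟩ := ha.2 b hb
  exact (succ_le_of_lt hbc).trans_lt hca

theorem WinningStrong.winningFair {κ : Cardinal.{u}} {X : Type u} [TopologicalSpace X]
    {σ : Strategy κ X} (h : WinningStrong σ) : WinningFair σ :=
  ⟨h.1, h.2.1, fun f hf => Or.inr (h.2.2.2 f hf)⟩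

theorem isOpen_cylinder {κ : Cardinal.{u}} (a : κ.ord.ToType) (y : GenBaire κ) :
    IsOpen {z : GenBaire κ | ∀ b < a, z b = y b} :=
  .basic _ ⟨a, y, rfl⟩

theorem isClosed_treeBody {κ : Cardinal.{u}} {T : Set (TreeSeq κ)} (hT : IsTreeOn κ T) :
    IsClosed (TreeBody κ T) := by
  refine isOpen_compl_iff.1 (isOpen_iff_forall_mem_open.2 fun y hy => ?_)
  obtain ⟨a, ha⟩ := not_forall.1 hy
  exact ⟨_, fun z hz hzT => ha ((hT.1 a z y hz).1 (hzT a)), isOpen_cylinder a y, fun _ _ => rfl⟩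

section Game

variable {κ : Cardinal.{u}} {X : Type u} {σ : Strategy κ X} {f g : IMoves κ X}
  {a : κ.ord.ToType}

theorem IsIIStrategy.interBelow_congr (hσ : IsIIStrategy σ) (h : ∀ c < a, f c = g c) :
    InterBelow (σ f) a = InterBelow (σ g) a :=
  iInter₂_congr fun c hc => hσ f g c fun d hd => h d (hd.trans_lt hc)

theorem IsIIStrategy.legal_congr [TopologicalSpace X] (hσ : IsIIStrategy σ)
    (h : ∀ c ≤ a, f c = g c) :
    (LegalI σ f a ↔ LegalI σ g a) ∧ (LegalII σ f a ↔ LegalII σ g a) := by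
  rw [LegalI, LegalI, LegalII, LegalII, hσ.interBelow_congr fun c hc => h c hc.le, h a le_rfl,
    hσ f g a h]
  exact ⟨Iff.rfl, Iff.rfl⟩

theorem IsIIStrategy.legalBelow_congr [TopologicalSpace X] (hσ : IsIIStrategy σ)
    (h : ∀ c < a, f c = g c) :
    LegalBelow σ f a ↔ LegalBelow σ g a :=
  forall₂_congr fun _ hc =>
    have hc' := hσ.legal_congr fun d hd => h d (hd.trans_lt hc)
    and_congr hc'.1 hc'.2

noncomputable def withMove (f : IMoves κ X) (b : κ.ord.ToType) (m : Set X × X) : IMoves κ X :=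
  fun γ => if γ < b then f γ else m

theorem exists_isOpen_answer_withMove [TopologicalSpace X] (hσ : IsIIStrategy σ)
    (hII : ∀ f a, LegalBelow σ f a → LegalI σ f a → LegalII σ f a) (hf : LegalBelow σ f a)
    {C : Set X} (hC : IsOpen C) (hCf : C ⊆ InterBelow (σ f) a) {u : X} (hu : u ∈ C) :
    ∃ O, IsOpen O ∧ u ∈ O ∧ σ (withMove f a (C, u)) a = O ∩ InterBelow (σ f) a := by
  have hbelow : ∀ c < a, withMove f a (C, u) c = f c := fun c hc => if_pos hc
  have hat : withMove f a (C, u) a = (C, u) := if_neg (lt_irrefl a)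
  have hinter := hσ.interBelow_congr hbelow
  have hI : LegalI σ (withMove f a (C, u)) a := by
    rw [LegalI, hat, hinter]
    exact ⟨⟨C, hC, (inter_eq_left.2 hCf).symm⟩, hu⟩
  obtain ⟨⟨O, hO, hans⟩, huans, -⟩ := hII _ _ ((hσ.legalBelow_congr hbelow).2 hf) hI
  rw [hat, hans] at huans
  exact ⟨O, hO, huans.1, by rw [hans, hinter]⟩

end Game

structure Scheme (κ : Cardinal.{u}) (X : Type u) [TopologicalSpace X] where
  W : κ.ord.ToType → Set X
  isClopen_W : ∀ a, IsClopen (W a)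
  exists_W_subset : ∀ x U, IsOpen U → x ∈ U → ∃ a, x ∈ W a ∧ W a ⊆ U
  code : atoms W ↪ κ.ord.ToType
  σ : Strategy κ X
  isIIStrategy : IsIIStrategy σ
  legalII : ∀ f a, LegalBelow σ f a → LegalI σ f a → LegalII σ f a

namespace Scheme

variable {κ : Cardinal.{u}} {X : Type u} [TopologicalSpace X] (S : Scheme κ X)

noncomputable def answer (f : IMoves κ X) (C : Set X) (b : κ.ord.ToType) (u : X) : Set X :=
  S.σ (withMove f b (C, u)) b

variable {S} in
theorem hasAtomsAbove_answer [NoMaxOrder κ.ord.ToType] {f : IMoves κ X} {C : Set X}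
    {b : κ.ord.ToType} (hf : LegalBelow S.σ f b) (hC : IsOpen C)
    (hCf : C ⊆ InterBelow (S.σ f) b) : HasAtomsAbove S.W C b (S.answer f C b) := by
  intro u hu
  obtain ⟨O, hO, huO, hans⟩ :=
    exists_isOpen_answer_withMove S.isIIStrategy S.legalII hf hC hCf hu
  obtain ⟨a, hua, haO⟩ := S.exists_W_subset u O hO huO
  refine ⟨succ (max a b), lt_succ_of_le (le_max_right a b), fun v hv => ?_⟩
  rw [answer, hans]
  exact ⟨haO (atom_subset (lt_succ_of_le (le_max_left a b)) hua hv.1), hCf hv.2⟩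

theorem answer_eq_of_eq {f : IMoves κ X} {C : Set X} {b : κ.ord.ToType} {u : X} (h : f b = (C, u)) :
    S.answer f C b u = S.σ f b :=
  S.isIIStrategy _ _ b fun c hc => by
    rcases hc.lt_or_eq with hc | rfl
    · exact if_pos hc
    · exact (if_neg (lt_irrefl c)).trans h.symm

/-! A run is encoded by `r : κ → Set X × X`: `(r β).1` is the piece chosen at round `β` and
`(r β).2` is I's point at round `β`; I's set at round `β` is the intersection of the earlier
pieces. -/

def cellOf (r : κ.ord.ToType → Set X × X) : κ.ord.ToType → Set X := InterBelow fun δ => (r δ).1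

def movesOf (r : κ.ord.ToType → Set X × X) : IMoves κ X := fun γ => (cellOf r γ, (r γ).2)

noncomputable def stepAnswer (r : κ.ord.ToType → Set X × X) (β : κ.ord.ToType) : X → Set X :=
  S.answer (movesOf r) (cellOf r β) β

noncomputable def stepAtom (r : κ.ord.ToType → Set X × X) (β : κ.ord.ToType) (x : X) : Set X :=
  atom S.W (pieceLevel S.W (cellOf r β) β (S.stepAnswer r β) x) x

noncomputable def step (r : κ.ord.ToType → Set X × X) (β : κ.ord.ToType) (x : X) : Set X × X :=
  (piece S.W (cellOf r β) β (S.stepAnswer r β) x,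
    pieceWitness S.W (cellOf r β) β (S.stepAnswer r β) x)

variable {r r' : κ.ord.ToType → Set X × X} {β : κ.ord.ToType}

omit [TopologicalSpace X] in
theorem cellOf_congr (h : ∀ γ < β, r γ = r' γ) : cellOf r β = cellOf r' β :=
  iInter₂_congr fun γ hγ => congrArg Prod.fst (h γ hγ)

theorem stepAnswer_congr (h : ∀ γ < β, r γ = r' γ) : S.stepAnswer r β = S.stepAnswer r' β := by
  have hmoves : ∀ m, withMove (movesOf r) β m = withMove (movesOf r') β m := fun m =>
    funext fun γ => by
      by_cases hγ : γ < β
      · simp only [withMove, if_pos hγ, movesOf, h γ hγ,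
          cellOf_congr fun δ hδ => h δ (hδ.trans hγ)]
      · simp only [withMove, if_neg hγ]
  funext u
  rw [stepAnswer, stepAnswer, answer, answer, hmoves, cellOf_congr h]

theorem stepAtom_congr (h : ∀ γ < β, r γ = r' γ) (x : X) :
    S.stepAtom r β x = S.stepAtom r' β x := by
  rw [stepAtom, stepAtom, cellOf_congr h, S.stepAnswer_congr h]

theorem step_congr (h : ∀ γ < β, r γ = r' γ) (x : X) : S.step r β x = S.step r' β x := by
  rw [step, step, cellOf_congr h, S.stepAnswer_congr h]

theorem step_fst (r : κ.ord.ToType → Set X × X) (β : κ.ord.ToType) (x : X) :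
    (S.step r β x).1 = S.stepAtom r β x ∩ cellOf r β := rfl

section StepPartition

variable {x u : X} (hV : HasAtomsAbove S.W (cellOf r β) β (S.stepAnswer r β))
  (hx : x ∈ cellOf r β)
include hV hx

theorem stepAtom_eq_of_mem (hu : u ∈ (S.step r β x).1) : S.stepAtom r β u = S.stepAtom r β x :=
  atom_pieceLevel_eq_of_mem hV hx hu

theorem step_eq_of_fst_eq (h : (S.step r β u).1 = (S.step r β x).1) :
    S.step r β u = S.step r β x :=
  Prod.ext h (pieceWitness_eq_of_piece_eq hV hx h)

end StepPartition

noncomputable def run (x : X) : κ.ord.ToType → Set X × X :=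
  wellFounded_lt.fix fun β rec => S.step (fun γ => if h : γ < β then rec γ h else (∅, x)) β x

noncomputable abbrev cell (x : X) : κ.ord.ToType → Set X := cellOf (S.run x)

noncomputable abbrev moves (x : X) : IMoves κ X := movesOf (S.run x)

noncomputable def movesAlong (xs : κ.ord.ToType → X) : IMoves κ X := fun γ => S.moves (xs γ) γ

noncomputable def toBaire (x : X) : GenBaire κ :=
  fun β => S.code ⟨S.stepAtom (S.run x) β x, atom_mem_atoms _ _⟩

theorem run_eq (x : X) (β : κ.ord.ToType) : S.run x β = S.step (S.run x) β x := by
  unfold run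
  rw [WellFounded.fix_eq]
  apply S.step_congr
  intro γ hγ
  simp only [dif_pos hγ]

theorem run_fst (x : X) (β : κ.ord.ToType) :
    (S.run x β).1 = S.stepAtom (S.run x) β x ∩ S.cell x β := by
  rw [run_eq]; rfl

theorem mem_cell (x : X) (β : κ.ord.ToType) : x ∈ S.cell x β := by
  induction β using WellFoundedLT.induction with | _ β ih =>
  refine mem_iInter₂.2 fun γ hγ => ?_
  show x ∈ (S.run x γ).1
  rw [run_eq]
  exact mem_piece (ih γ hγ)

def tree : Set (TreeSeq κ) := {q | ∃ x, ∀ γ < q.1, S.toBaire x γ = q.2 γ}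

theorem isTreeOn_tree : IsTreeOn κ S.tree :=
  ⟨fun a y y' h => exists_congr fun _ => forall₂_congr fun γ hγ => by dsimp only; rw [h γ hγ],
    fun _ _ ⟨x, hx⟩ b hb => ⟨x, fun γ hγ => hx γ (hγ.trans_le hb)⟩⟩

theorem treePruned_tree : TreePruned κ S.tree :=
  fun _ _ ⟨x, hx⟩ _ _ => ⟨S.toBaire x, fun γ hγ => hx γ hγ, x, fun _ _ => rfl⟩

variable [NoMaxOrder κ.ord.ToType] (hadd : KAdditive κ X)
include hadd

theorem run_sound (x : X) (γ : κ.ord.ToType) :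
    IsClopen (S.run x γ).1 ∧ (S.run x γ).1 ⊆ S.σ (S.moves x) γ ∧
      LegalI S.σ (S.moves x) γ ∧ LegalII S.σ (S.moves x) γ := by
  induction γ using WellFoundedLT.induction with | _ γ ih =>
  have hcell : IsClopen (S.cell x γ) := hadd.isClopen_interBelow fun δ hδ => (ih δ hδ).1
  have hsub : S.cell x γ ⊆ InterBelow (S.σ (S.moves x)) γ := iInter₂_mono fun δ hδ => (ih δ hδ).2.1
  have hV : HasAtomsAbove S.W (S.cell x γ) γ (S.stepAnswer (S.run x) γ) :=
    hasAtomsAbove_answer (fun δ hδ => (ih δ hδ).2.2) hcell.isOpen hsub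
  have hx := S.mem_cell x γ
  have hmove : S.moves x γ = (S.cell x γ, pieceWitness S.W (S.cell x γ) γ
      (S.stepAnswer (S.run x) γ) x) := by
    rw [moves, movesOf, run_eq]; rfl
  have hI : LegalI S.σ (S.moves x) γ := by
    rw [LegalI, hmove]
    exact ⟨⟨_, hcell.isOpen, (inter_eq_left.2 hsub).symm⟩, piece_subset (pieceWitness_mem hx)⟩
  refine ⟨?_, ?_, hI, S.legalII _ _ (fun δ hδ => (ih δ hδ).2.2) hI⟩
  · rw [run_fst]
    exact (hadd.isClopen_atom S.isClopen_W _ _).inter hcell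
  · rw [run_eq, ← S.answer_eq_of_eq hmove]
    exact piece_subset_pieceWitness hV hx

theorem isClopen_cell (x : X) (β : κ.ord.ToType) : IsClopen (S.cell x β) :=
  hadd.isClopen_interBelow fun γ _ => (S.run_sound hadd x γ).1

theorem cell_subset_interBelow (x : X) (β : κ.ord.ToType) :
    S.cell x β ⊆ InterBelow (S.σ (S.moves x)) β :=
  iInter₂_mono fun γ _ => (S.run_sound hadd x γ).2.1

theorem legal_moves (x : X) (γ : κ.ord.ToType) :
    LegalI S.σ (S.moves x) γ ∧ LegalII S.σ (S.moves x) γ :=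
  (S.run_sound hadd x γ).2.2

theorem hasAtomsAbove_stepAnswer (x : X) (β : κ.ord.ToType) :
    HasAtomsAbove S.W (S.cell x β) β (S.stepAnswer (S.run x) β) :=
  hasAtomsAbove_answer (fun γ _ => S.legal_moves hadd x γ) (S.isClopen_cell hadd x β).isOpen
    (S.cell_subset_interBelow hadd x β)

theorem run_eq_of_mem_cell {x x' : X} {α : κ.ord.ToType} (h : x' ∈ S.cell x α) :
    ∀ γ < α, S.run x' γ = S.run x γ := by
  intro γ
  induction γ using WellFoundedLT.induction with | _ γ ih =>
  intro hγ
  have hagree : ∀ δ < γ, S.run x' δ = S.run x δ := fun δ hδ => ih δ hδ (hδ.trans hγ)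
  have hmem : x' ∈ (S.step (S.run x) γ x).1 := by rw [← run_eq]; exact mem_iInter₂.1 h γ hγ
  rw [S.run_eq x', S.step_congr hagree, S.run_eq x]
  have hV := S.hasAtomsAbove_stepAnswer hadd x γ
  exact S.step_eq_of_fst_eq hV (S.mem_cell x γ)
    (by rw [step_fst, step_fst, S.stepAtom_eq_of_mem hV (S.mem_cell x γ) hmem])

theorem run_eq_of_toBaire_eq {x x' : X} {α : κ.ord.ToType}
    (h : ∀ γ < α, S.toBaire x' γ = S.toBaire x γ) : ∀ γ < α, S.run x' γ = S.run x γ := by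
  intro γ
  induction γ using WellFoundedLT.induction with | _ γ ih =>
  intro hγ
  have hagree : ∀ δ < γ, S.run x' δ = S.run x δ := fun δ hδ => ih δ hδ (hδ.trans hγ)
  have hatom : S.stepAtom (S.run x) γ x' = S.stepAtom (S.run x) γ x := by
    rw [← S.stepAtom_congr hagree]
    exact congrArg Subtype.val (S.code.injective (h γ hγ))
  rw [S.run_eq x', S.step_congr hagree, S.run_eq x]
  exact S.step_eq_of_fst_eq (S.hasAtomsAbove_stepAnswer hadd x γ) (S.mem_cell x γ)
    (by rw [step_fst, step_fst, hatom])

theorem mem_cell_iff {x x' : X} {α : κ.ord.ToType} :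
    x' ∈ S.cell x α ↔ ∀ γ < α, S.toBaire x' γ = S.toBaire x γ := by
  refine ⟨fun h γ hγ => ?_, fun h => ?_⟩
  · have hmem : x' ∈ (S.step (S.run x) γ x).1 := by rw [← run_eq]; exact mem_iInter₂.1 h γ hγ
    simp only [toBaire, S.stepAtom_congr fun δ hδ => S.run_eq_of_mem_cell hadd h δ (hδ.trans hγ),
      S.stepAtom_eq_of_mem (S.hasAtomsAbove_stepAnswer hadd x γ) (S.mem_cell x γ) hmem]
  · show x' ∈ cellOf (S.run x) α
    rw [← cellOf_congr (S.run_eq_of_toBaire_eq hadd h)]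
    exact S.mem_cell x' α

theorem exists_cell_subset {x : X} {O : Set X} (hO : IsOpen O) (hx : x ∈ O) :
    ∃ c, S.cell x c ⊆ O := by
  obtain ⟨a, hxa, haO⟩ := S.exists_W_subset x O hO hx
  refine ⟨succ a, fun u hu => haO ?_⟩
  have hu' : u ∈ (S.run x a).1 := mem_iInter₂.1 hu a (lt_succ a)
  rw [run_fst] at hu'
  exact atom_subset (lt_pieceLevel (S.hasAtomsAbove_stepAnswer hadd x a) (S.mem_cell x a)) hxa hu'.1

theorem continuous_toBaire : Continuous S.toBaire := by
  refine continuous_generateFrom_iff.2 ?_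
  rintro _ ⟨a, y, rfl⟩
  refine isOpen_iff_forall_mem_open.2 fun x hx => ⟨S.cell x a, fun x' hx' b hb => ?_,
    (S.isClopen_cell hadd x a).isOpen, S.mem_cell x a⟩
  rw [(S.mem_cell_iff hadd).1 hx' b hb]
  exact hx b hb

theorem isEmbedding_toBaire [T1Space X] : IsEmbedding S.toBaire := by
  have hpre : ∀ x a, S.toBaire ⁻¹' {z | ∀ b < a, z b = S.toBaire x b} = S.cell x a :=
    fun x a => ext fun _ => (S.mem_cell_iff hadd).symm
  refine ⟨isInducing_iff_nhds.2 fun x => le_antisymm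
    ((S.continuous_toBaire hadd).tendsto x).le_comap fun O hO => ?_, fun x x' h => ?_⟩
  · obtain ⟨c, hc⟩ := S.exists_cell_subset hadd isOpen_interior (mem_interior_iff_mem_nhds.2 hO)
    exact ⟨_, (isOpen_cylinder c _).mem_nhds fun _ _ => rfl,
      (hpre x c).trans_subset (hc.trans interior_subset)⟩
  · by_contra hne
    obtain ⟨c, hc⟩ := S.exists_cell_subset hadd isOpen_compl_singleton hne
    exact hc ((S.mem_cell_iff hadd).2 fun γ _ => h.symm ▸ rfl) rfl

theorem moves_eq_of_toBaire_eq {x x' : X} {γ : κ.ord.ToType}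
    (h : ∀ δ ≤ γ, S.toBaire x' δ = S.toBaire x δ) : S.moves x' γ = S.moves x γ := by
  have hrun := S.run_eq_of_toBaire_eq hadd (α := succ γ) fun δ hδ => h δ (lt_succ_iff.1 hδ)
  show (cellOf (S.run x') γ, (S.run x' γ).2) = (cellOf (S.run x) γ, (S.run x γ).2)
  rw [cellOf_congr fun δ hδ => hrun δ (hδ.trans (lt_succ γ)), hrun γ (lt_succ γ)]

section Along

/-! If the code of `xs γ` agrees with `y` up to `γ` for every round `γ ∈ s`, the moves of the runs
of the points `xs γ` cohere into a single legal run, and II's answers in it only contain points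
whose codes follow `y`. -/

variable {s : Set κ.ord.ToType} {xs : κ.ord.ToType → X} {y : GenBaire κ}
  (hxs : ∀ γ ∈ s, ∀ δ ≤ γ, S.toBaire (xs γ) δ = y δ)
include hxs

theorem movesAlong_eq {x : X} {δ : κ.ord.ToType} (hδ : δ ∈ s)
    (hx : ∀ ε ≤ δ, S.toBaire x ε = y ε) : S.movesAlong xs δ = S.moves x δ :=
  S.moves_eq_of_toBaire_eq hadd fun ε hε => (hxs δ hδ ε hε).trans (hx ε hε).symm

theorem legal_movesAlong (hs : IsLowerSet s) {γ : κ.ord.ToType} (hγ : γ ∈ s) :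
    (LegalI S.σ (S.movesAlong xs) γ ∧ LegalII S.σ (S.movesAlong xs) γ) ∧
      S.σ (S.movesAlong xs) γ = S.σ (S.moves (xs γ)) γ := by
  have h : ∀ δ ≤ γ, S.movesAlong xs δ = S.moves (xs γ) δ := fun δ hδ =>
    S.movesAlong_eq hadd hxs (hs hδ hγ) fun ε hε => hxs γ hγ ε (hε.trans hδ)
  have hcongr := S.isIIStrategy.legal_congr h
  exact ⟨⟨hcongr.1.2 (S.legal_moves hadd _ γ).1, hcongr.2.2 (S.legal_moves hadd _ γ).2⟩,
    S.isIIStrategy _ _ γ h⟩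

theorem toBaire_eq_of_mem_movesAlong (hs : IsLowerSet s) {γ : κ.ord.ToType} (hγ : succ γ ∈ s)
    {z : X} (hz : z ∈ S.σ (S.movesAlong xs) (succ γ)) : S.toBaire z γ = y γ := by
  rw [(S.legal_movesAlong hadd hxs hs hγ).2] at hz
  have hcell : z ∈ S.cell (xs (succ γ)) (succ γ) := (S.legal_moves hadd _ _).2.2.2 hz
  exact ((S.mem_cell_iff hadd).1 hcell γ (lt_succ γ)).trans (hxs _ hγ γ (le_succ γ))

end Along

theorem range_eq_treeBody (hσ : WinningFair S.σ) : range S.toBaire = TreeBody κ S.tree := by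
  refine subset_antisymm (fun _ ⟨x, hx⟩ α => ⟨x, fun γ _ => hx ▸ rfl⟩) fun y hy => ?_
  choose xs hxs using fun γ => hy (succ γ)
  have hxs' : ∀ γ ∈ Set.univ, ∀ δ ≤ γ, S.toBaire (xs γ) δ = y δ :=
    fun γ _ δ hδ => hxs γ δ (lt_succ_iff.2 hδ)
  rcases hσ.2.2 (S.movesAlong xs) fun γ => (S.legal_movesAlong hadd hxs' isLowerSet_univ
    (Set.mem_univ γ)).1 with ⟨α, -, hα⟩ | ⟨z, hz⟩
  · -- a point realizing `y` below `α` lies in all of II's sets before round `α`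
    obtain ⟨x, hx⟩ := hy α
    have hinter : InterBelow (S.σ (S.movesAlong xs)) α = InterBelow (S.σ (S.moves x)) α :=
      S.isIIStrategy.interBelow_congr fun δ hδ => S.movesAlong_eq hadd hxs' (Set.mem_univ δ)
        fun ε hε => hx ε (hε.trans_lt hδ)
    have hx' := S.cell_subset_interBelow hadd x α (S.mem_cell x α)
    rw [← hinter, hα] at hx'
    exact hx'.elim
  · exact ⟨z, funext fun γ => S.toBaire_eq_of_mem_movesAlong hadd hxs' isLowerSet_univ
      (Set.mem_univ _) (mem_iInter.1 hz _)⟩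

theorem treeLtClosed_tree (hσ : WinningStrong S.σ) : TreeLtClosed κ S.tree := by
  intro α hα y hy
  obtain ⟨x₀, -⟩ := hy _ hα.1.choose_spec
  have hreal : ∀ γ, ∃ x, γ ∈ Iio α → ∀ δ ≤ γ, S.toBaire x δ = y δ := fun γ => by
    by_cases hγ : γ < α
    · obtain ⟨x, hx⟩ := hy (succ γ) (hα.succ_lt hγ)
      exact ⟨x, fun _ δ hδ => hx δ (lt_succ_iff.2 hδ)⟩
    · exact ⟨x₀, fun h => absurd h hγ⟩
  choose xs hxs using hreal
  obtain ⟨z, hz⟩ := hσ.2.2.1 (S.movesAlong xs) α hα fun γ hγ =>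
    (S.legal_movesAlong hadd hxs (isLowerSet_Iio α) hγ).1
  exact ⟨z, fun γ hγ => S.toBaire_eq_of_mem_movesAlong hadd hxs (isLowerSet_Iio α)
    (hα.succ_lt hγ) (mem_iInter₂.1 hz _ (hα.succ_lt hγ))⟩

end Scheme

theorem exists_scheme {κ : Cardinal.{u}} {X : Type u} [TopologicalSpace X] [RegularSpace X]
    (hκ : κ.IsRegular) (hunc : ℵ₀ < κ) (hpow : 2 ^< κ = κ) (hadd : KAdditive κ X)
    (hw : HasWeightLE κ X) (σ : Strategy κ X) (hσ : IsIIStrategy σ)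
    (hII : ∀ f a, LegalBelow σ f a → LegalI σ f a → LegalII σ f a) :
    ∃ S : Scheme κ X, S.σ = σ := by
  obtain ⟨W, hWc, hWb⟩ := exists_isClopen_basis hκ hunc hpow hadd hw
  obtain ⟨code⟩ := (le_def _ _).1 ((mk_atoms_le hκ hpow (W := W)).trans_eq (mk_ord_toType κ).symm)
  exact ⟨⟨W, hWc, hWb, code, σ, hσ, hII⟩, rfl⟩

/-- every κ-additive fSC_κ-space is homeomorphic to a closed subset of κ^κ;
if moreover it is an SC_κ-space, to a superclosed subset. -/
theorem stmt_4 (κ : Cardinal.{u}) (hreg : κ.IsRegular) (hunc : ℵ₀ < κ)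
    (hpow : (2 : Cardinal.{u}) ^< κ = κ)
    (X : Type u) [TopologicalSpace X] [T2Space X] [RegularSpace X]
    (hadd : KAdditive κ X) (hfsc : fSCSpace κ X) :
    (∃ C : Set (GenBaire κ), IsClosed C ∧ Nonempty (X ≃ₜ ↥C)) ∧
    (SCSpace κ X → ∃ C : Set (GenBaire κ), IsSuperclosedSet κ C ∧ Nonempty (X ≃ₜ ↥C)) := by
  have := noMaxOrder hunc.le
  obtain ⟨hw, σ, hσ⟩ := hfsc
  obtain ⟨S, rfl⟩ := exists_scheme hreg hunc hpow hadd hw σ hσ.1 hσ.2.1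
  refine ⟨⟨_, S.range_eq_treeBody hadd hσ ▸ isClosed_treeBody S.isTreeOn_tree,
    ⟨(S.isEmbedding_toBaire hadd).toHomeomorph⟩⟩, fun ⟨_, τ, hτ⟩ => ?_⟩
  obtain ⟨S', rfl⟩ := exists_scheme hreg hunc hpow hadd hw τ hτ.1 hτ.2.1
  exact ⟨_, ⟨S'.tree, ⟨S'.isTreeOn_tree, S'.treePruned_tree, S'.treeLtClosed_tree hadd hτ⟩,
    S'.range_eq_treeBody hadd hτ.winningFair⟩, ⟨(S'.isEmbedding_toBaire hadd).toHomeomorph⟩⟩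

end GDST
end
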